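/- arXiv:2510.17312 — 9 statements merged into one kernel-verified Lean document; each statement's English description precedes it below -/
import Mathlib

section
/- If D is a connected dominating set of a connected graph G, then D is a longest path transversal of G, i.e., every longest path of G contains at least one vertex of D. -/
open SimpleGraph

/-- `p` is a longest path in `G`: it is a path of maximum length among all paths of `G`. -/
def IsLongestPath {V : Type*} (G : SimpleGraph V) {u v : V} (p : G.Walk u v) : Prop :=
  p.IsPath ∧ ∀ ⦃a b : V⦄ (q : G.Walk a b), q.IsPath → q.length ≤ p.length

/-- `S` is a longest path transversal of `G`: it meets every longest path. -/
def IsLPTransversal {V : Type*} (G : SimpleGraph V) (S : Set V) : Prop :=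
  ∀ ⦃u v : V⦄ (p : G.Walk u v), IsLongestPath G p → ∃ x ∈ S, x ∈ p.support

/-- `A` dominates `B`: every vertex of `B` is in `A` or has a neighbor in `A`. -/
def Dominates {V : Type*} (G : SimpleGraph V) (A B : Set V) : Prop :=
  ∀ b ∈ B, b ∈ A ∨ ∃ a ∈ A, G.Adj a b

/-- Closed neighborhood `N[X]` of a set of vertices. -/
def closedNbhd {V : Type*} (G : SimpleGraph V) (X : Set V) : Set V :=
  X ∪ {v | ∃ x ∈ X, G.Adj x v}

/-- `bd(X,Y)`: vertices of `X` having a neighbor in `Y`. -/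
def bd {V : Type*} (G : SimpleGraph V) (X Y : Set V) : Set V :=
  {x ∈ X | ∃ y ∈ Y, G.Adj x y}

/-- `C` is (the vertex set of) a connected component of `G - M`. -/
def IsComponentOf {V : Type*} (G : SimpleGraph V) (M : Set V) (C : Set V) : Prop :=
  ∃ c ∉ M, C = {v | ∃ p : G.Walk v c, ∀ x ∈ p.support, x ∉ M}

/-- `M` is a monitor in `G`: for every component `C` of `G - M` some vertex of `M`
is complete to `C`. -/
def IsMonitor {V : Type*} (G : SimpleGraph V) (M : Set V) : Prop :=
  ∀ C : Set V, IsComponentOf G M C → ∃ w ∈ M, ∀ c ∈ C, G.Adj w c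

/-- `X` induces a path in `G`. -/
def IsInducedPath {V : Type*} (G : SimpleGraph V) (X : Set V) : Prop :=
  ∃ (n : ℕ) (f : SimpleGraph.pathGraph n ↪g G), Set.range f = X

/-- `X` induces a maximal induced path in `G`. -/
def IsMaximalInducedPath {V : Type*} (G : SimpleGraph V) (X : Set V) : Prop :=
  IsInducedPath G X ∧ ∀ Y : Set V, IsInducedPath G Y → X ⊆ Y → X = Y

/-- The bull: a path 0-1-2-3 plus a vertex 4 adjacent to the middle vertices 1 and 2. -/
def bull : SimpleGraph (Fin 5) :=
  SimpleGraph.fromRel (fun i j => (i.val, j.val) ∈ [(0,1),(1,2),(2,3),(1,4),(2,4)])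

/-- The chair: the claw with center 0 and leaves 1,2,3, with the edge to 3 subdivided by 4. -/
def chair : SimpleGraph (Fin 5) :=
  SimpleGraph.fromRel (fun i j => (i.val, j.val) ∈ [(0,1),(0,2),(0,4),(4,3)])

/-- A graph is chordal if it has no induced cycle of length at least four. -/
def IsChordal {V : Type*} (G : SimpleGraph V) : Prop :=
  ∀ n : ℕ, 4 ≤ n → IsEmpty (SimpleGraph.cycleGraph n ↪g G)

/-- `Kₜ ⋈ K̄ₜ`: a clique of size `t` and an independent set of size `t` joined by
a perfect matching. -/
def kMatchK (t : ℕ) : SimpleGraph (Fin t ⊕ Fin t) :=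
  SimpleGraph.fromRel (fun x y =>
    (∃ i j : Fin t, x = Sum.inl i ∧ y = Sum.inl j) ∨
    (∃ i : Fin t, x = Sum.inl i ∧ y = Sum.inr i))

/-- A connected dominating set is a longest path transversal. -/
theorem stmt_1 {V : Type*} [Fintype V] (G : SimpleGraph V) (hG : G.Connected)
    (D : Set V) (hdom : Dominates G D Set.univ) (hconn : (G.induce D).Connected) :
    IsLPTransversal G D := by
  rintro u v p ⟨hp, hmax⟩
  rcases hdom u (Set.mem_univ u) with hu | ⟨a, ha, hadj⟩
  · exact ⟨u, hu, p.start_mem_support⟩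
  by_cases hs : a ∈ p.support
  · exact ⟨a, ha, hs⟩
  · have hq : (p.cons hadj).IsPath := hp.cons hs
    have := hmax _ hq
    simp [SimpleGraph.Walk.length_cons] at this
end

section
/- Let G be a connected graph, M ⊆ V(G) a longest path transversal of G, and D ⊆ M a set that dominates M and induces a connected subgraph of G. Let C₁,…,Cₜ be the connected components of G − M, for each i let tᵢ be the maximum length of a path in G[Cᵢ] having at least one endpoint with a neighbor in M, and let C_max be a component maximizing tᵢ. If S ⊆ M dominates the set of vertices of C_max having a neighbor in M, then D ∪ S is a longest path transversal of G. -/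
open SimpleGraph

section Helpers

open SimpleGraph

namespace LPTAux

variable {V : Type*} {G : SimpleGraph V}

lemma findEdge {A : V → Prop} :
    ∀ {x y : V} (p : G.Walk x y), A x → ¬ A y →
    ∃ (z m : V) (q : G.Walk x z) (e : G.Adj z m) (r : G.Walk m y),
      (∀ v ∈ q.support, A v) ∧ ¬ A m ∧ p = q.append (Walk.cons e r) := by
  intro x y p
  induction p with
  | nil => intro hx hy; exact absurd hx hy
  | @cons x w y h p ih =>
    intro hx hy
    by_cases hw : A w
    · obtain ⟨z, m, q, e, r, hq, hm, hEq⟩ := ih hw hy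
      refine ⟨z, m, Walk.cons h q, e, r, ?_, hm, ?_⟩
      · intro v hv
        rw [Walk.support_cons, List.mem_cons] at hv
        rcases hv with rfl | hv
        · exact hx
        · exact hq v hv
      · rw [Walk.cons_append, hEq]
    · exact ⟨x, w, Walk.nil, h, p, by simp [hx], hw, by simp⟩

lemma assoc_step {α β γ μ δ ε : V} (a : G.Walk α β) (q' : G.Walk β γ) (e' : G.Adj γ μ)
    (r' : G.Walk μ δ) (d' : G.Walk δ ε) :
    (a.append q').append (Walk.cons e' (r'.append d')) =
      a.append ((q'.append (Walk.cons e' r')).append d') := by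
  simp only [← Walk.append_assoc, Walk.cons_append]

lemma exists_cross {A : V → Prop} [DecidableEq V] {x y : V} (p : G.Walk x y) (hp : p.IsPath)
    {v1 v2 : V} (h1 : v1 ∈ p.support) (h2 : v2 ∈ p.support) (hA1 : A v1) (hA2 : ¬ A v2) :
    ∃ (x' y' z m : V) (q : G.Walk x' z) (e : G.Adj z m) (r : G.Walk m y'),
      A z ∧ ¬ A m ∧ (q.append (Walk.cons e r)).IsPath ∧
      (q.append (Walk.cons e r)).length = p.length ∧
      ∀ v ∈ (q.append (Walk.cons e r)).support, v ∈ p.support := by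
  have hps : (p.takeUntil v1 h1).append (p.dropUntil v1 h1) = p := p.take_spec h1
  have h2' : v2 ∈ (p.takeUntil v1 h1).support ∨ v2 ∈ (p.dropUntil v1 h1).support := by
    rw [← Walk.mem_support_append_iff, hps]; exact h2
  rcases h2' with h2' | h2'
  · -- v2 appears before v1 : work in p.reverse
    have h2'' : v2 ∈ (p.takeUntil v1 h1).reverse.support := by
      rw [Walk.support_reverse]; exact List.mem_reverse.mpr h2'
    have hps2 : ((p.takeUntil v1 h1).reverse.takeUntil v2 h2'').append
        ((p.takeUntil v1 h1).reverse.dropUntil v2 h2'') = (p.takeUntil v1 h1).reverse :=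
      Walk.take_spec _ h2''
    obtain ⟨z, m, q, e, r, hq, hm, hEq⟩ :=
      findEdge ((p.takeUntil v1 h1).reverse.takeUntil v2 h2'') hA1 hA2
    have hfull : ((p.dropUntil v1 h1).reverse.append q).append
        (Walk.cons e (r.append ((p.takeUntil v1 h1).reverse.dropUntil v2 h2''))) = p.reverse := by
      rw [assoc_step, ← hEq, hps2, ← Walk.reverse_append, hps]
    refine ⟨y, x, z, m, (p.dropUntil v1 h1).reverse.append q, e,
      r.append ((p.takeUntil v1 h1).reverse.dropUntil v2 h2''), hq z q.end_mem_support, hm,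
      ?_, ?_, ?_⟩
    · rw [hfull]; exact hp.reverse
    · rw [hfull]; exact Walk.length_reverse p
    · rw [hfull]; intro v hv; rw [Walk.support_reverse, List.mem_reverse] at hv; exact hv
  · have hps2 : ((p.dropUntil v1 h1).takeUntil v2 h2').append
        ((p.dropUntil v1 h1).dropUntil v2 h2') = p.dropUntil v1 h1 := Walk.take_spec _ h2'
    obtain ⟨z, m, q, e, r, hq, hm, hEq⟩ := findEdge ((p.dropUntil v1 h1).takeUntil v2 h2') hA1 hA2
    have hfull : ((p.takeUntil v1 h1).append q).append
        (Walk.cons e (r.append ((p.dropUntil v1 h1).dropUntil v2 h2'))) = p := by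
      rw [assoc_step, ← hEq, hps2, hps]
    refine ⟨x, y, z, m, (p.takeUntil v1 h1).append q, e,
      r.append ((p.dropUntil v1 h1).dropUntil v2 h2'), hq z q.end_mem_support, hm, ?_, ?_, ?_⟩
    · rw [hfull]; exact hp
    · rw [hfull]
    · rw [hfull]; intro v hv; exact hv

lemma assemble {w z s u y : V} (P1 : G.Walk w z) (e : G.Adj z s) (Q : G.Walk s u)
    (B : G.Walk u y) (h1 : P1.IsPath) (hQ : Q.IsPath) (hB : B.IsPath)
    (hPQ : ∀ v ∈ P1.support, v ∉ Q.support)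
    (hPB : ∀ v ∈ P1.support, v ∉ B.support.tail)
    (hQB : ∀ v ∈ Q.support, v ∉ B.support.tail) :
    ∃ W : G.Walk w y, W.IsPath ∧ W.length = P1.length + 1 + Q.length + B.length := by
  refine ⟨P1.append (Walk.cons e (Q.append B)), ?_, ?_⟩
  · rw [Walk.isPath_def, Walk.support_append, Walk.support_cons, List.tail_cons,
      Walk.support_append]
    rw [List.nodup_append]
    refine ⟨h1.support_nodup, ?_, ?_⟩
    · rw [List.nodup_append]
      refine ⟨hQ.support_nodup, ?_, ?_⟩
      · exact (hB.support_nodup).sublist (List.tail_sublist _)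
      · intro a ha b hb hab; subst hab; exact hQB a ha hb
    · intro a ha b hb hab
      subst hab
      rw [List.mem_append] at hb
      rcases hb with hb | hb
      · exact hPQ a ha hb
      · exact hPB a ha hb
  · rw [Walk.length_append, Walk.length_cons, Walk.length_append]
    omega

lemma bridge {D M : Set V} (hDM : D ⊆ M) (hdom : ∀ b ∈ M, b ∈ D ∨ ∃ a ∈ D, G.Adj a b)
    (hconn : (G.induce D).Connected) {s u : V} (hs : s ∈ M) (hu : u ∈ M)
    (huD : u ∉ D) (hsu : s ≠ u) :
    ∃ Q : G.Walk s u, Q.IsPath ∧ (∀ v ∈ Q.support, v = s ∨ v = u ∨ v ∈ D) ∧ 1 ≤ Q.length := by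
  classical
  rcases hdom u hu with h | ⟨d, hdD, hdu⟩
  · exact absurd h huD
  have key : ∀ d1, d1 ∈ D → ∃ T : G.Walk d1 d, T.IsPath ∧ ∀ v ∈ T.support, v ∈ D := by
    intro d1 h1
    obtain ⟨w0⟩ := hconn.preconnected ⟨d1, h1⟩ ⟨d, hdD⟩
    refine ⟨(w0.toPath.val.map (Embedding.induce D).toHom), ?_, ?_⟩
    · exact Walk.map_isPath_of_injective Subtype.val_injective w0.toPath.2
    · intro v hv
      replace hv : v ∈ List.map (Embedding.induce (G := G) D).toHom w0.toPath.val.support := by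
        rw [← Walk.support_map]; exact hv
      rw [List.mem_map] at hv
      obtain ⟨a, _, rfl⟩ := hv
      exact a.2
  by_cases hsD : s ∈ D
  · obtain ⟨T, hT, hTD⟩ := key s hsD
    have huT : u ∉ T.reverse.support := by
      rw [Walk.support_reverse, List.mem_reverse]; exact fun h => huD (hTD u h)
    refine ⟨(Walk.cons hdu.symm T.reverse).reverse, ?_, ?_, ?_⟩
    · exact (hT.reverse.cons huT).reverse
    · intro v hv
      rw [Walk.support_reverse, List.mem_reverse, Walk.support_cons, List.mem_cons] at hv
      rcases hv with rfl | hv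
      · exact Or.inr (Or.inl rfl)
      · rw [Walk.support_reverse, List.mem_reverse] at hv
        exact Or.inr (Or.inr (hTD v hv))
    · rw [Walk.length_reverse, Walk.length_cons]; omega
  · rcases hdom s hs with h | ⟨d1, hd1D, hd1s⟩
    · exact absurd h hsD
    obtain ⟨T, hT, hTD⟩ := key d1 hd1D
    have hsT : s ∉ T.support := fun h => hsD (hTD s h)
    have hinner : (Walk.cons hd1s.symm T).IsPath := hT.cons hsT
    have huT : u ∉ (Walk.cons hd1s.symm T).reverse.support := by
      rw [Walk.support_reverse, List.mem_reverse, Walk.support_cons, List.mem_cons]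
      rintro (rfl | hv)
      · exact hsu rfl
      · exact huD (hTD u hv)
    refine ⟨(Walk.cons hdu.symm (Walk.cons hd1s.symm T).reverse).reverse, ?_, ?_, ?_⟩
    · exact (hinner.reverse.cons huT).reverse
    · intro v hv
      rw [Walk.support_reverse, List.mem_reverse, Walk.support_cons, List.mem_cons] at hv
      rcases hv with rfl | hv
      · exact Or.inr (Or.inl rfl)
      · rw [Walk.support_reverse, List.mem_reverse, Walk.support_cons, List.mem_cons] at hv
        rcases hv with rfl | hv
        · exact Or.inl rfl
        · exact Or.inr (Or.inr (hTD v hv))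
    · rw [Walk.length_reverse, Walk.length_cons]; omega

end LPTAux

end Helpers

/-- Refining a longest path transversal: given a longest path transversal `M`,
a connected dominating set `D` of `G[M]`, a path-maximal component `Cmax` of `G - M`,
and a set `S ⊆ M` dominating `bd(Cmax, M)`, the set `D ∪ S` is a longest path
transversal of `G`. -/
theorem stmt_2 {V : Type*} [Fintype V] (G : SimpleGraph V) (hG : G.Connected)
    (M : Set V) (hM : IsLPTransversal G M)
    (D : Set V) (hDM : D ⊆ M) (hDdom : Dominates G D M)
    (hDconn : (G.induce D).Connected)
    (Cmax : Set V) (hCmax : IsComponentOf G M Cmax)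
    (hmax : ∀ C : Set V, IsComponentOf G M C →
      ∀ ⦃a b : V⦄ (q : G.Walk a b), q.IsPath → (∀ x ∈ q.support, x ∈ C) →
        a ∈ bd G C M →
        ∃ (a' b' : V) (p : G.Walk a' b'), p.IsPath ∧ (∀ x ∈ p.support, x ∈ Cmax) ∧
          a' ∈ bd G Cmax M ∧ q.length ≤ p.length)
    (S : Set V) (hSM : S ⊆ M) (hS : Dominates G S (bd G Cmax M)) :
    IsLPTransversal G (D ∪ S) := by
  classical
  intro x y p hp
  by_contra hcon
  push_neg at hcon
  have hD' : ∀ v ∈ p.support, v ∉ D := fun v hv hvD => hcon v (Or.inl hvD) hv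
  have hS' : ∀ v ∈ p.support, v ∉ S := fun v hv hvS => hcon v (Or.inr hvS) hv
  obtain ⟨m0, hm0M, hm0p⟩ := hM p hp
  obtain ⟨c, hcM, hCeq⟩ := hCmax
  have hCM : ∀ v ∈ Cmax, v ∉ M := by
    intro v hv
    rw [hCeq] at hv
    obtain ⟨w, hw⟩ := hv
    exact hw v w.start_mem_support
  have hclose : ∀ z m, z ∈ Cmax → G.Adj z m → m ∉ M → m ∈ Cmax := by
    intro z m hz hzm hmM
    rw [hCeq] at hz ⊢
    obtain ⟨w, hw⟩ := hz
    refine ⟨Walk.cons hzm.symm w, ?_⟩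
    intro v hv
    rw [Walk.support_cons, List.mem_cons] at hv
    rcases hv with rfl | hv
    · exact hmM
    · exact hw v hv
  have hbridge : ∀ s u', s ∈ M → s ∉ p.support → u' ∈ M → u' ∈ p.support →
      ∃ Q : G.Walk s u', Q.IsPath ∧ (∀ v ∈ Q.support, v = s ∨ v = u' ∨ v ∈ D) ∧
        1 ≤ Q.length := by
    intro s u' hsM hsp hu'M hu'p
    exact LPTAux.bridge hDM hDdom hDconn hsM hu'M (fun h => hD' u' hu'p h)
      (fun h => hsp (h ▸ hu'p))
  have hpickS : ∀ z m', z ∈ Cmax → m' ∈ M → G.Adj z m' →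
      ∃ s ∈ S, G.Adj z s ∧ s ∉ p.support := by
    intro z m' hz hm'M hzm
    have hzbd : z ∈ bd G Cmax M := ⟨hz, m', hm'M, hzm⟩
    rcases hS z hzbd with h | ⟨s, hsS, hsz⟩
    · exact absurd (hSM h) (hCM z hz)
    · exact ⟨s, hsS, hsz.symm, fun h => hS' s h hsS⟩
  by_cases hPC : ∃ v ∈ p.support, v ∈ Cmax
  · -- p meets Cmax: replace an edge between Cmax and M by a detour through S and D
    obtain ⟨zc, hzcp, hzcC⟩ := hPC
    have hm0C : m0 ∉ Cmax := fun h => hCM m0 h hm0M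
    obtain ⟨x', y', z, m, q, e, r, hzC, hmC, hcpath, hclen, hcsub⟩ :=
      LPTAux.exists_cross (A := fun v => v ∈ Cmax) p hp.1 hzcp hm0p hzcC hm0C
    have hmM : m ∈ M := by
      by_contra h
      exact hmC (hclose z m hzC e h)
    obtain ⟨s, hsS, hzs, hsp⟩ := hpickS z m hzC hmM e
    have hmp : m ∈ p.support := by
      apply hcsub
      rw [Walk.mem_support_append_iff]
      refine Or.inr ?_
      rw [Walk.support_cons, List.mem_cons]
      exact Or.inr r.start_mem_support
    have hnd : (q.support ++ r.support).Nodup := by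
      have h0 := hcpath
      rw [Walk.isPath_def, Walk.support_append, Walk.support_cons, List.tail_cons] at h0
      exact h0
    rw [List.nodup_append] at hnd
    obtain ⟨hndq, hndr, hdisj⟩ := hnd
    obtain ⟨Q, hQpath, hQsup, hQlen⟩ := hbridge s m (hSM hsS) hsp hmM hmp
    have hqsub : ∀ v ∈ q.support, v ∈ p.support := by
      intro v hv
      exact hcsub v (by rw [Walk.mem_support_append_iff]; exact Or.inl hv)
    have hrsub : ∀ v ∈ r.support, v ∈ p.support := by
      intro v hv
      apply hcsub
      rw [Walk.mem_support_append_iff, Walk.support_cons, List.mem_cons]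
      exact Or.inr (Or.inr hv)
    have hPQ : ∀ v ∈ q.support, v ∉ Q.support := by
      intro v hv hvQ
      rcases hQsup v hvQ with rfl | rfl | hvD
      · exact hsp (hqsub v hv)
      · exact hdisj _ hv _ (Walk.start_mem_support r) rfl
      · exact hD' v (hqsub v hv) hvD
    have hPB : ∀ v ∈ q.support, v ∉ r.support.tail := by
      intro v hv hvB
      exact hdisj _ hv _ ((List.tail_sublist _).subset hvB) rfl
    have hQB : ∀ v ∈ Q.support, v ∉ r.support.tail := by
      intro v hvQ hvB
      have hvB' : v ∈ r.support := (List.tail_sublist _).subset hvB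
      rcases hQsup v hvQ with rfl | rfl | hvD
      · exact hsp (hrsub v hvB')
      · have h1 := hndr
        rw [r.support_eq_cons] at h1
        exact (List.nodup_cons.mp h1).1 hvB
      · exact hD' v (hrsub v hvB') hvD
    obtain ⟨W, hWpath, hWlen⟩ := LPTAux.assemble q hzs Q r
      ((Walk.isPath_def _).mpr hndq) hQpath ((Walk.isPath_def _).mpr hndr) hPQ hPB hQB
    have hle := hp.2 W hWpath
    rw [Walk.length_append, Walk.length_cons] at hclen
    omega
  · -- p avoids Cmax: replace the initial segment of p by a longer pendant path of Cmax
    push_neg at hPC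
    have hxM : x ∉ M := by
      intro hxM
      rcases hDdom x hxM with h | ⟨d, hdD, hdx⟩
      · exact hD' x p.start_mem_support h
      · have hdp : d ∉ p.support := fun h => hD' d h hdD
        have hW : (Walk.cons hdx p).IsPath := hp.1.cons hdp
        have hle := hp.2 _ hW
        rw [Walk.length_cons] at hle
        omega
    obtain ⟨a, u', q, e, r, hqA, hu'M', hEq⟩ :=
      LPTAux.findEdge (A := fun v => v ∉ M) (p.takeUntil m0 hm0p) hxM (not_not_intro hm0M)
    have hu'M : u' ∈ M := not_not.mp hu'M'
    have hfull : q.append (Walk.cons e (r.append (p.dropUntil m0 hm0p))) = p := by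
      have h1 : q.append (Walk.cons e (r.append (p.dropUntil m0 hm0p)))
          = (q.append (Walk.cons e r)).append (p.dropUntil m0 hm0p) := by
        rw [← Walk.cons_append, Walk.append_assoc]
      rw [h1, ← hEq]
      exact p.take_spec hm0p
    set B := r.append (p.dropUntil m0 hm0p) with hBdef
    have h0 : (q.append (Walk.cons e B)).IsPath := by rw [hfull]; exact hp.1
    have hlenfull : q.length + (B.length + 1) = p.length := by
      have h2 : (q.append (Walk.cons e B)).length = p.length := by rw [hfull]
      rw [Walk.length_append, Walk.length_cons] at h2
      exact h2
    have hsubfull : ∀ v, v ∈ q.support ∨ v ∈ B.support → v ∈ p.support := by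
      intro v hv
      have h2 : v ∈ (q.append (Walk.cons e B)).support := by
        rw [Walk.mem_support_append_iff, Walk.support_cons, List.mem_cons]
        rcases hv with hv | hv
        · exact Or.inl hv
        · exact Or.inr (Or.inr hv)
      rw [hfull] at h2
      exact h2
    obtain ⟨hndq, hndB, hdisj⟩ : q.support.Nodup ∧ B.support.Nodup ∧
        q.support.Disjoint B.support := by
      rw [Walk.isPath_def, Walk.support_append, Walk.support_cons, List.tail_cons,
        List.nodup_append] at h0
      exact ⟨h0.1, h0.2.1, fun a ha hb => h0.2.2 a ha a hb rfl⟩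
    have haM : a ∉ M := hqA a q.end_mem_support
    have hCcomp : IsComponentOf G M {v | ∃ w : G.Walk v a, ∀ u'' ∈ w.support, u'' ∉ M} :=
      ⟨a, haM, rfl⟩
    have hqrevC : ∀ v ∈ q.reverse.support,
        v ∈ {v | ∃ w : G.Walk v a, ∀ u'' ∈ w.support, u'' ∉ M} := by
      intro v hv
      rw [Walk.support_reverse, List.mem_reverse] at hv
      exact ⟨q.dropUntil v hv, fun u'' hu'' =>
        hqA u'' (Walk.support_dropUntil_subset q hv hu'')⟩
    have habd : a ∈ bd G {v | ∃ w : G.Walk v a, ∀ u'' ∈ w.support, u'' ∉ M} M := by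
      refine ⟨⟨Walk.nil, ?_⟩, u', hu'M, e⟩
      intro u'' hu''
      rw [Walk.support_nil, List.mem_singleton] at hu''
      exact hu'' ▸ haM
    obtain ⟨a', b', p', hp'path, hp'C, ha'bd, hlen⟩ :=
      hmax _ hCcomp q.reverse ((Walk.isPath_def _).mpr hndq).reverse hqrevC habd
    obtain ⟨ha'C, m', hm'M, ha'm'⟩ := ha'bd
    obtain ⟨s, hsS, hsza, hsp⟩ := hpickS a' m' ha'C hm'M ha'm'
    have hu'p : u' ∈ p.support := hsubfull u' (Or.inr B.start_mem_support)
    obtain ⟨Q, hQpath, hQsup, hQlen⟩ := hbridge s u' (hSM hsS) hsp hu'M hu'p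
    have hPQ : ∀ v ∈ p'.reverse.support, v ∉ Q.support := by
      intro v hv hvQ
      rw [Walk.support_reverse, List.mem_reverse] at hv
      have hvC : v ∈ Cmax := hp'C v hv
      rcases hQsup v hvQ with rfl | rfl | hvD
      · exact hCM v hvC (hSM hsS)
      · exact hCM v hvC hu'M
      · exact hCM v hvC (hDM hvD)
    have hPB : ∀ v ∈ p'.reverse.support, v ∉ B.support.tail := by
      intro v hv hvB
      rw [Walk.support_reverse, List.mem_reverse] at hv
      exact hPC v (hsubfull v (Or.inr ((List.tail_sublist _).subset hvB))) (hp'C v hv)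
    have hQB : ∀ v ∈ Q.support, v ∉ B.support.tail := by
      intro v hvQ hvB
      have hvB' : v ∈ B.support := (List.tail_sublist _).subset hvB
      rcases hQsup v hvQ with rfl | rfl | hvD
      · exact hsp (hsubfull v (Or.inr hvB'))
      · rw [B.support_eq_cons] at hndB
        exact (List.nodup_cons.mp hndB).1 hvB
      · exact hD' v (hsubfull v (Or.inr hvB')) hvD
    have hndBpath : B.IsPath := (Walk.isPath_def _).mpr hndB
    obtain ⟨W, hWpath, hWlen⟩ := LPTAux.assemble p'.reverse hsza Q B
      hp'path.reverse hQpath hndBpath hPQ hPB hQB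
    have hle := hp.2 W hWpath
    rw [Walk.length_reverse] at hWlen
    have hlq : q.reverse.length ≤ p'.length := hlen
    rw [Walk.length_reverse] at hlq
    omega
end

section
/- Let G be a connected (bull, chair)-free graph on at least three vertices, and let X ⊆ V(G) induce a maximal induced path on at least three vertices. Then N[X] is a monitor in G: for every connected component C of G − N[X] there is a vertex in N[X] complete to C. -/
open SimpleGraph

section Aux

instance : DecidableRel chair.Adj := fun a b =>
  decidable_of_iff' _ (SimpleGraph.fromRel_adj _ a b)

instance : DecidableRel bull.Adj := fun a b =>
  decidable_of_iff' _ (SimpleGraph.fromRel_adj _ a b)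

lemma chair_false {V : Type*} {G : SimpleGraph V} (hchair : IsEmpty (chair ↪g G))
    (v0 v1 v2 v3 v4 : V)
    (h01 : G.Adj v0 v1) (h02 : G.Adj v0 v2) (h04 : G.Adj v0 v4) (h43 : G.Adj v4 v3)
    (n12 : ¬G.Adj v1 v2) (n14 : ¬G.Adj v1 v4) (n24 : ¬G.Adj v2 v4)
    (n03 : ¬G.Adj v0 v3) (n13 : ¬G.Adj v1 v3) (n23 : ¬G.Adj v2 v3)
    (d12 : v1 ≠ v2) (d14 : v1 ≠ v4) (d24 : v2 ≠ v4) (d03 : v0 ≠ v3) (d13 : v1 ≠ v3)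
    (d23 : v2 ≠ v3) : False := by
  have d01 := h01.ne; have d02 := h02.ne; have d04 := h04.ne; have d43 := h43.ne
  apply hchair.false
  refine ⟨⟨![v0,v1,v2,v3,v4], ?_⟩, ?_⟩
  · intro i j hij
    fin_cases i <;> fin_cases j <;> simp_all <;> simp_all [eq_comm]
  · intro i j
    fin_cases i <;> fin_cases j
    · exact iff_of_false (G.irrefl) (by decide)
    · exact iff_of_true h01 (by decide)
    · exact iff_of_true h02 (by decide)
    · exact iff_of_false n03 (by decide)
    · exact iff_of_true h04 (by decide)
    · exact iff_of_true h01.symm (by decide)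
    · exact iff_of_false (G.irrefl) (by decide)
    · exact iff_of_false n12 (by decide)
    · exact iff_of_false n13 (by decide)
    · exact iff_of_false n14 (by decide)
    · exact iff_of_true h02.symm (by decide)
    · exact iff_of_false (fun h => n12 h.symm) (by decide)
    · exact iff_of_false (G.irrefl) (by decide)
    · exact iff_of_false n23 (by decide)
    · exact iff_of_false n24 (by decide)
    · exact iff_of_false (fun h => n03 h.symm) (by decide)
    · exact iff_of_false (fun h => n13 h.symm) (by decide)
    · exact iff_of_false (fun h => n23 h.symm) (by decide)
    · exact iff_of_false (G.irrefl) (by decide)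
    · exact iff_of_true h43.symm (by decide)
    · exact iff_of_true h04.symm (by decide)
    · exact iff_of_false (fun h => n14 h.symm) (by decide)
    · exact iff_of_false (fun h => n24 h.symm) (by decide)
    · exact iff_of_true h43 (by decide)
    · exact iff_of_false (G.irrefl) (by decide)

lemma bull_false {V : Type*} {G : SimpleGraph V} (hbull : IsEmpty (bull ↪g G))
    (v0 v1 v2 v3 v4 : V)
    (h01 : G.Adj v0 v1) (h12 : G.Adj v1 v2) (h23 : G.Adj v2 v3) (h14 : G.Adj v1 v4)
    (h24 : G.Adj v2 v4)
    (n02 : ¬G.Adj v0 v2) (n03 : ¬G.Adj v0 v3) (n13 : ¬G.Adj v1 v3) (n04 : ¬G.Adj v0 v4)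
    (n34 : ¬G.Adj v3 v4)
    (d02 : v0 ≠ v2) (d03 : v0 ≠ v3) (d13 : v1 ≠ v3) (d04 : v0 ≠ v4)
    (d34 : v3 ≠ v4) : False := by
  have d01 := h01.ne; have d12 := h12.ne; have d23 := h23.ne; have d14 := h14.ne
  have d24 := h24.ne
  apply hbull.false
  refine ⟨⟨![v0,v1,v2,v3,v4], ?_⟩, ?_⟩
  · intro i j hij
    fin_cases i <;> fin_cases j <;> simp_all <;> simp_all [eq_comm]
  · intro i j
    fin_cases i <;> fin_cases j
    · exact iff_of_false (G.irrefl) (by decide)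
    · exact iff_of_true h01 (by decide)
    · exact iff_of_false n02 (by decide)
    · exact iff_of_false n03 (by decide)
    · exact iff_of_false n04 (by decide)
    · exact iff_of_true h01.symm (by decide)
    · exact iff_of_false (G.irrefl) (by decide)
    · exact iff_of_true h12 (by decide)
    · exact iff_of_false n13 (by decide)
    · exact iff_of_true h14 (by decide)
    · exact iff_of_false (fun h => n02 h.symm) (by decide)
    · exact iff_of_true h12.symm (by decide)
    · exact iff_of_false (G.irrefl) (by decide)
    · exact iff_of_true h23 (by decide)
    · exact iff_of_true h24 (by decide)
    · exact iff_of_false (fun h => n03 h.symm) (by decide)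
    · exact iff_of_false (fun h => n13 h.symm) (by decide)
    · exact iff_of_true h23.symm (by decide)
    · exact iff_of_false (G.irrefl) (by decide)
    · exact iff_of_false n34 (by decide)
    · exact iff_of_false (fun h => n04 h.symm) (by decide)
    · exact iff_of_true h14.symm (by decide)
    · exact iff_of_true h24.symm (by decide)
    · exact iff_of_false (fun h => n34 h.symm) (by decide)
    · exact iff_of_false (G.irrefl) (by decide)

def pathRevEmb (n : ℕ) : pathGraph n ↪g pathGraph n :=
  { toFun := Fin.rev
    inj' := Fin.rev_injective
    map_rel_iff' := by
      intro a b
      simp only [Function.Embedding.coeFn_mk, pathGraph_adj, Fin.val_rev]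
      have := a.isLt; have := b.isLt
      omega }

lemma no_pendant_front {V : Type*} {G : SimpleGraph V} {X : Set V}
    (hX : IsMaximalInducedPath G X) {n : ℕ} (hn : 0 < n)
    (f : SimpleGraph.pathGraph n ↪g G) (hrange : Set.range f = X)
    {w : V} (hwX : w ∉ X) (hw0 : G.Adj w (f ⟨0, hn⟩))
    (hnot : ∀ k : Fin n, k.val ≠ 0 → ¬G.Adj w (f k)) : False := by
  have hwr : ∀ j : Fin n, w ≠ f j := fun j h => hwX (hrange ▸ ⟨j, h.symm⟩)
  set gfun : Fin (n+1) → V := Fin.cases w (fun i => f i) with hg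
  have hg0 : gfun 0 = w := rfl
  have hgs : ∀ i : Fin n, gfun i.succ = f i := fun i => by simp [hg]
  have hginj : Function.Injective gfun := by
    intro a b hab
    rcases a.eq_zero_or_eq_succ with rfl | ⟨i, rfl⟩ <;>
      rcases b.eq_zero_or_eq_succ with rfl | ⟨j, rfl⟩
    · rfl
    · rw [hg0, hgs] at hab; exact absurd hab (hwr j)
    · rw [hg0, hgs] at hab; exact absurd hab.symm (hwr i)
    · rw [hgs, hgs] at hab
      rw [f.injective hab]
  have hrel : ∀ a b : Fin (n+1), G.Adj (gfun a) (gfun b) ↔ (pathGraph (n+1)).Adj a b := by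
    intro a b
    rcases a.eq_zero_or_eq_succ with rfl | ⟨i, rfl⟩ <;>
      rcases b.eq_zero_or_eq_succ with rfl | ⟨j, rfl⟩
    · simp [pathGraph_adj]
    · rw [hg0, hgs, pathGraph_adj]
      simp only [Fin.val_zero, Fin.val_succ]
      constructor
      · intro h
        by_contra hcon
        exact hnot j (by omega) h
      · intro h
        have hv0 : ((⟨0, hn⟩:Fin n)).val = 0 := rfl
        have : j = ⟨0, hn⟩ := Fin.ext (by omega)
        rw [this]; exact hw0
    · rw [hg0, hgs, pathGraph_adj]
      simp only [Fin.val_zero, Fin.val_succ]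
      rw [G.adj_comm]
      constructor
      · intro h
        by_contra hcon
        exact hnot i (by omega) h
      · intro h
        have hv0 : ((⟨0, hn⟩:Fin n)).val = 0 := rfl
        have : i = ⟨0, hn⟩ := Fin.ext (by omega)
        rw [this]; exact hw0
    · rw [hgs, hgs, f.map_rel_iff, pathGraph_adj, pathGraph_adj]
      simp only [Fin.val_succ]
      omega
  have hrangeg : Set.range gfun = insert w X := by
    ext v
    constructor
    · rintro ⟨a, rfl⟩
      rcases a.eq_zero_or_eq_succ with rfl | ⟨i, rfl⟩
      · exact Set.mem_insert _ _
      · rw [hgs]; exact Set.mem_insert_of_mem _ (hrange ▸ ⟨i, rfl⟩)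
    · rintro (rfl | hv)
      · exact ⟨0, rfl⟩
      · rw [← hrange] at hv; obtain ⟨i, rfl⟩ := hv
        exact ⟨i.succ, hgs i⟩
  have hYpath : IsInducedPath G (insert w X) :=
    ⟨n + 1, ⟨⟨gfun, hginj⟩, fun {a b} => hrel a b⟩, hrangeg⟩
  have heq := hX.2 _ hYpath (Set.subset_insert w X)
  exact hwX (by rw [heq]; exact Set.mem_insert _ _)

lemma exists_boundary {V : Type*} {G : SimpleGraph V} {M : Set V} :
    ∀ {a b : V} (p : G.Walk a b), a ∉ M → b ∈ M →
      ∃ u v, G.Adj u v ∧ v ∈ M ∧ ∃ q : G.Walk u a, ∀ x ∈ q.support, x ∉ M := by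
  intro a b p
  induction p with
  | nil => intro ha hb; exact absurd hb ha
  | @cons a s b h p ih =>
    intro ha _hb
    by_cases hs : s ∈ M
    · refine ⟨a, s, h, hs, Walk.nil, ?_⟩
      intro x hx
      rw [Walk.support_nil] at hx
      simp only [List.mem_singleton] at hx
      exact hx ▸ ha
    · obtain ⟨u, v, huv, hvM, q, hq⟩ := ih hs _hb
      refine ⟨u, v, huv, hvM, q.append (Walk.cons h.symm Walk.nil), ?_⟩
      intro x hx
      rw [Walk.mem_support_append_iff] at hx
      rcases hx with hx | hx
      · exact hq x hx
      · rw [Walk.support_cons, Walk.support_nil] at hx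
        simp only [List.mem_cons, List.mem_singleton, List.not_mem_nil, or_false] at hx
        rcases hx with rfl | rfl
        exacts [hs, ha]

lemma propagate {V : Type*} {G : SimpleGraph V} (hchair : IsEmpty (chair ↪g G))
    {M : Set V} {w xa xb : V} (hw : w ∈ M) (hxa : xa ∈ M) (hxb : xb ∈ M)
    (hwa : G.Adj w xa) (hwb : G.Adj w xb) (hab : ¬G.Adj xa xb) (dab : xa ≠ xb)
    (hMa : ∀ z, z ∉ M → ¬G.Adj xa z) (hMb : ∀ z, z ∉ M → ¬G.Adj xb z) :
    ∀ {p c : V} (r : G.Walk p c), (∀ x ∈ r.support, x ∉ M) → G.Adj w p → G.Adj w c := by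
  intro p c r
  induction r with
  | nil => intro _ h; exact h
  | @cons p s c h r ih =>
    intro hr hwp
    apply ih (fun x hx => hr x (by rw [Walk.support_cons]; exact List.mem_cons_of_mem _ hx))
    by_cases hws : G.Adj w s
    · exact hws
    exfalso
    have hpM : p ∉ M := hr p (Walk.start_mem_support _)
    have hsM : s ∉ M := hr s (by
      rw [Walk.support_cons]; exact List.mem_cons_of_mem _ r.start_mem_support)
    exact chair_false hchair w xa xb s p hwa hwb hwp h
      hab (hMa p hpM) (hMb p hpM) hws (hMa s hsM) (hMb s hsM)
      dab (fun e => hpM (e ▸ hxa)) (fun e => hpM (e ▸ hxb)) (fun e => hsM (e ▸ hw))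
      (fun e => hsM (e ▸ hxa)) (fun e => hsM (e ▸ hxb))

lemma two_nonadj {V : Type*} {G : SimpleGraph V}
    (hbull : IsEmpty (bull ↪g G)) (hchair : IsEmpty (chair ↪g G))
    {X : Set V} (hX : IsMaximalInducedPath G X) (hX3 : 3 ≤ X.ncard)
    {w u : V} (hwX : w ∉ X) (hwu : G.Adj w u)
    (huX : ∀ x ∈ X, ¬G.Adj x u) (huXm : u ∉ X)
    (hwadj : ∃ x ∈ X, G.Adj x w) :
    ∃ a b : V, a ∈ X ∧ b ∈ X ∧ G.Adj w a ∧ G.Adj w b ∧ ¬G.Adj a b ∧ a ≠ b := by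
  obtain ⟨n, f, hrange⟩ := hX.1
  have hmemX : ∀ k : Fin n, f k ∈ X := fun k => hrange ▸ ⟨k, rfl⟩
  have hn3 : 3 ≤ n := by
    have hcard : X.ncard = n := by
      rw [← hrange, ← Set.image_univ, Set.ncard_image_of_injective _ f.injective,
        Set.ncard_univ]
      simp
    omega
  by_contra hcon
  push_neg at hcon
  have H : ∀ k l : Fin n, G.Adj w (f k) → G.Adj w (f l) → k = l ∨ (pathGraph n).Adj k l := by
    intro k l hk hl
    by_cases hadj : G.Adj (f k) (f l)
    · exact Or.inr (f.map_rel_iff.mp hadj)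
    · exact Or.inl (f.injective (hcon _ _ (hmemX k) (hmemX l) hk hl hadj))
  obtain ⟨x, hxX, hxw⟩ := hwadj
  rw [← hrange] at hxX
  obtain ⟨j, rfl⟩ := hxX
  have hwj : G.Adj w (f j) := hxw.symm
  have hNadj : ∀ k : Fin n, ¬G.Adj (f k) u := fun k => huX _ (hmemX k)
  have hne_u : ∀ k : Fin n, f k ≠ u := fun k h => huXm (h ▸ hmemX k)
  have hne_w : ∀ k : Fin n, f k ≠ w := fun k h => hwX (h ▸ hmemX k)
  by_cases hsingle : ∀ l : Fin n, G.Adj w (f l) → l = j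
  · rcases Nat.lt_or_ge j.val (n-1) with hjtop | hjtop
    · rcases Nat.eq_zero_or_pos j.val with hj0 | hj0
      · -- j = 0 : extend path at the front
        have hj : j = ⟨0, by omega⟩ := Fin.ext (by simpa using hj0)
        rw [hj] at hwj
        exact no_pendant_front hX (by omega) f hrange hwX hwj
          (fun k hk h => by
            have h1 := congrArg Fin.val (hsingle k h)
            exact hk (by omega))
      · -- interior vertex : chair
        set jm : Fin n := ⟨j.val - 1, by omega⟩ with hjm
        set jp : Fin n := ⟨j.val + 1, by omega⟩ with hjp
        have hjmv : jm.val = j.val - 1 := rfl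
        have hjpv : jp.val = j.val + 1 := rfl
        refine chair_false hchair (f j) (f jm) (f jp) u w
          (f.map_rel_iff.mpr (by rw [pathGraph_adj]; omega))
          (f.map_rel_iff.mpr (by rw [pathGraph_adj]; omega))
          hwj.symm hwu
          (fun h => by
            have h2 := f.map_rel_iff.mp h
            rw [pathGraph_adj] at h2
            omega)
          (fun h => by
            have h1 := congrArg Fin.val (hsingle jm h.symm)
            omega)
          (fun h => by
            have h1 := congrArg Fin.val (hsingle jp h.symm)
            omega)
          (hNadj j) (hNadj jm) (hNadj jp)
          (fun h => by
            have h1 := congrArg Fin.val (f.injective h)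
            omega)
          (hne_w jm) (hne_w jp) (hne_u j) (hne_u jm) (hne_u jp)
    · -- j is the last vertex : reverse the path and extend at the front
      have hjt : j.val = n - 1 := by have := j.isLt; omega
      have hn : 0 < n := by omega
      refine no_pendant_front hX hn (f.comp (pathRevEmb n)) ?_ hwX ?_ ?_
      · have hco : ⇑(f.comp (pathRevEmb n)) = ⇑f ∘ Fin.rev := rfl
        rw [hco, Fin.rev_surjective.range_comp]
        exact hrange
      · have hco : (f.comp (pathRevEmb n)) ⟨0, hn⟩ = f (Fin.rev ⟨0, hn⟩) := rfl
        rw [hco]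
        have : Fin.rev ⟨0, hn⟩ = j := by
          apply Fin.ext
          rw [Fin.val_rev]
          simp only []
          omega
        rw [this]; exact hwj
      · intro k hk h
        have hco : (f.comp (pathRevEmb n)) k = f (Fin.rev k) := rfl
        rw [hco] at h
        have h1 := congrArg Fin.val (hsingle _ h)
        rw [Fin.val_rev] at h1
        have := k.isLt
        omega
  · push_neg at hsingle
    obtain ⟨l, hl, hlj⟩ := hsingle
    rcases H l j hl hwj with heq | hadj
    · exact absurd heq hlj
    rw [pathGraph_adj] at hadj
    have key : ∃ i ip : Fin n, ip.val = i.val + 1 ∧ G.Adj w (f i) ∧ G.Adj w (f ip) := by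
      rcases hadj with h1 | h1
      · exact ⟨l, j, h1.symm, hl, hwj⟩
      · exact ⟨j, l, h1.symm, hwj, hl⟩
    obtain ⟨i, ip, hii, hwi, hwip⟩ := key
    have honly : ∀ k : Fin n, G.Adj w (f k) → k = i ∨ k = ip := by
      intro k hk
      rcases H k i hk hwi with h | h
      · exact Or.inl h
      rcases H k ip hk hwip with h' | h'
      · exact Or.inr h'
      rw [pathGraph_adj] at h h'
      exfalso; omega
    have bullcase : ∀ ka kb kc : Fin n,
        (pathGraph n).Adj ka kb → (pathGraph n).Adj kb kc → ¬(pathGraph n).Adj ka kc →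
        ka ≠ kc → G.Adj w (f kb) → G.Adj w (f kc) → ¬G.Adj w (f ka) → False := by
      intro ka kb kc hab hbc hac hakc hwb hwc hwa
      exact bull_false hbull (f ka) (f kb) w u (f kc)
        (f.map_rel_iff.mpr hab) hwb.symm hwu (f.map_rel_iff.mpr hbc) hwc
        (fun h => hwa h.symm) (hNadj ka) (hNadj kb)
        (fun h => hac (f.map_rel_iff.mp h)) (fun h => hNadj kc h.symm)
        (hne_w ka) (hne_u ka) (hne_u kb)
        (fun h => hakc (f.injective h)) (fun h => hne_u kc h.symm)
    rcases Nat.eq_zero_or_pos i.val with hi0 | hi0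
    · -- i = 0 : mirrored bull with index 2
      have h2n : (2:ℕ) < n := by omega
      have hv2 : ((⟨2, h2n⟩ : Fin n)).val = 2 := rfl
      refine bullcase ⟨2, h2n⟩ ip i ?_ ?_ ?_ ?_ hwip hwi ?_
      · rw [pathGraph_adj]; omega
      · rw [pathGraph_adj]; omega
      · rw [pathGraph_adj]; omega
      · intro h
        have h1 := congrArg Fin.val h
        omega
      · intro h
        rcases honly _ h with h' | h' <;>
          · have h1 := congrArg Fin.val h'
            omega
    · -- i ≥ 1 : bull with i-1, i, ip
      have him : (i.val : ℕ) - 1 < n := by have := i.isLt; omega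
      have hvm : ((⟨i.val - 1, him⟩ : Fin n)).val = i.val - 1 := rfl
      refine bullcase ⟨i.val - 1, him⟩ i ip ?_ ?_ ?_ ?_ hwi hwip ?_
      · rw [pathGraph_adj]; omega
      · rw [pathGraph_adj]; omega
      · rw [pathGraph_adj]; omega
      · intro h
        have h1 := congrArg Fin.val h
        omega
      · intro h
        rcases honly _ h with h' | h' <;>
          · have h1 := congrArg Fin.val h'
            omega

end Aux

/-- In a connected (bull, chair)-free graph on at least three vertices, the closed
neighborhood of a maximal induced path on at least three vertices is a monitor. -/
theorem stmt_6 {V : Type*} [Fintype V] (G : SimpleGraph V) (hG : G.Connected)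
    (hcard : 3 ≤ Fintype.card V)
    (hbull : IsEmpty (bull ↪g G)) (hchair : IsEmpty (chair ↪g G))
    (X : Set V) (hX : IsMaximalInducedPath G X) (hX3 : 3 ≤ X.ncard) :
    IsMonitor G (closedNbhd G X) := by
  intro C hC
  obtain ⟨c₀, hc₀M, hCdef⟩ := hC
  set M := closedNbhd G X with hM
  have hXsub : X ⊆ M := Set.subset_union_left
  have hCM : ∀ v ∈ C, v ∉ M := by
    intro v hv
    rw [hCdef] at hv
    obtain ⟨p, hp⟩ := hv
    exact hp v p.start_mem_support
  have hXne : X.Nonempty := Set.nonempty_of_ncard_ne_zero (by omega)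
  obtain ⟨x₀, hx₀⟩ := hXne
  obtain ⟨pw⟩ := hG.preconnected c₀ x₀
  obtain ⟨u, v, huv, hvM, q, hq⟩ := exists_boundary pw hc₀M (hXsub hx₀)
  have huC : u ∈ C := by rw [hCdef]; exact ⟨q, hq⟩
  have huM : u ∉ M := hCM u huC
  have hvX : v ∉ X := fun h => huM (Or.inr ⟨v, h, huv.symm⟩)
  have hvadj : ∃ x ∈ X, G.Adj x v := by
    rcases hvM with h | h
    · exact absurd h hvX
    · exact h
  have huX : ∀ x ∈ X, ¬G.Adj x u := fun x hx h => huM (Or.inr ⟨x, hx, h⟩)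
  have huXm : u ∉ X := fun h => huM (Or.inl h)
  obtain ⟨a, b, haX, hbX, hwa, hwb, hab, hne⟩ :=
    two_nonadj hbull hchair hX hX3 hvX huv.symm huX huXm hvadj
  refine ⟨v, hvM, ?_⟩
  intro c hc
  rw [hCdef] at hc
  obtain ⟨qc, hqc⟩ := hc
  have hr : ∀ x ∈ (q.append qc.reverse).support, x ∉ M := by
    intro x hx
    rw [Walk.mem_support_append_iff] at hx
    rcases hx with hx | hx
    · exact hq x hx
    · rw [Walk.support_reverse, List.mem_reverse] at hx
      exact hqc x hx
  exact propagate hchair hvM (hXsub haX) (hXsub hbX) hwa hwb hab hne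
    (fun z hz h => hz (Or.inr ⟨a, haX, h⟩)) (fun z hz h => hz (Or.inr ⟨b, hbX, h⟩))
    (q.append qc.reverse) hr huv.symm
end

section
/- If G is a connected chordal graph, then there exists a clique K in G such that K is a longest path transversal of G (every longest path of G contains a vertex of K). -/
open SimpleGraph

namespace LPT
variable {V : Type*} {G : SimpleGraph V}




/-- Appending two paths with supports meeting only at the junction is a path. -/
lemma isPath_append {u v w : V} {p : G.Walk u v} {q : G.Walk v w}
    (hp : p.IsPath) (hq : q.IsPath)
    (h : ∀ z, z ∈ p.support → z ∈ q.support → z = v) : (p.append q).IsPath := by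
  rw [SimpleGraph.Walk.isPath_def, SimpleGraph.Walk.support_append]
  refine List.Nodup.append hp.support_nodup ?_ ?_
  · have := hq.support_nodup
    rw [q.support_eq_cons] at this
    exact this.of_cons
  · intro z hz hz'
    have hzq : z ∈ q.support := by
      rw [q.support_eq_cons]; exact List.mem_cons_of_mem _ hz'
    have hzv : z = v := h z hz hzq
    subst hzv
    have := hq.support_nodup
    rw [q.support_eq_cons] at this
    exact (List.nodup_cons.mp this).1 hz'

lemma one_le_length_of_ne {x y : V} (hxy : x ≠ y) (w : G.Walk x y) : 1 ≤ w.length := by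
  cases w with
  | nil => exact absurd rfl hxy
  | cons h p => simp [SimpleGraph.Walk.length_cons]

/-- On a path, `getVert` is injective on indices up to the length. -/
lemma getVert_inj {x y : V} (w : G.Walk x y) (hw : w.IsPath) :
    ∀ i j, i ≤ w.length → j ≤ w.length → w.getVert i = w.getVert j → i = j := by
  induction w with
  | nil => intro i j hi hj _; simp [SimpleGraph.Walk.length_nil] at hi hj; omega
  | @cons a b c hadj p ih =>
    intro i j hi hj hij
    rw [SimpleGraph.Walk.length_cons] at hi hj
    match i, j with
    | 0, 0 => rfl
    | 0, (k+1) =>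
      exfalso
      rw [SimpleGraph.Walk.getVert_zero, SimpleGraph.Walk.getVert_cons_succ] at hij
      have hk : a ∈ p.support :=
        SimpleGraph.Walk.mem_support_iff_exists_getVert.mpr ⟨k, hij.symm, by omega⟩
      exact ((SimpleGraph.Walk.cons_isPath_iff _ _).mp hw).2 hk
    | (k+1), 0 =>
      exfalso
      rw [SimpleGraph.Walk.getVert_zero, SimpleGraph.Walk.getVert_cons_succ] at hij
      have hk : a ∈ p.support :=
        SimpleGraph.Walk.mem_support_iff_exists_getVert.mpr ⟨k, hij, by omega⟩
      exact ((SimpleGraph.Walk.cons_isPath_iff _ _).mp hw).2 hk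
    | (k+1), (l+1) =>
      have := ih hw.of_cons k l (by omega) (by omega)
        (by simpa [SimpleGraph.Walk.getVert_cons_succ] using hij)
      omega

lemma length_drop {x y : V} (w : G.Walk x y) (n : ℕ) :
    (w.drop n).length = w.length - n := by
  induction n generalizing x w with
  | zero => cases w <;> simp [SimpleGraph.Walk.drop]
  | succ n ih =>
    cases w with
    | nil => simp [SimpleGraph.Walk.drop]
    | cons h p => simp [SimpleGraph.Walk.drop, ih, SimpleGraph.Walk.length_cons]

lemma support_drop_subset {x y : V} (w : G.Walk x y) (n : ℕ) :
    ∀ z ∈ (w.drop n).support, z ∈ w.support := by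
  induction n generalizing x w with
  | zero => cases w <;> simp [SimpleGraph.Walk.drop]
  | succ n ih =>
    cases w with
    | nil => intro z hz; exact hz
    | cons h p =>
      intro z hz
      simp only [SimpleGraph.Walk.drop, SimpleGraph.Walk.support_copy] at hz
      exact SimpleGraph.Walk.mem_support_iff_exists_getVert.mpr (by
        obtain ⟨m, hm, hml⟩ := SimpleGraph.Walk.mem_support_iff_exists_getVert.mp (ih p z hz)
        exact ⟨m+1, by simpa [SimpleGraph.Walk.getVert_cons_succ] using hm, by
          simp [SimpleGraph.Walk.length_cons]; omega⟩)


/-- A chord gives a strictly shorter walk with support inside the old support. -/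
lemma chord_shortcut {y : V} :
    ∀ (i j : ℕ) {x : V} (W : G.Walk x y), i + 2 ≤ j → j ≤ W.length →
      G.Adj (W.getVert i) (W.getVert j) →
      ∃ W' : G.Walk x y, (∀ z ∈ W'.support, z ∈ W.support) ∧ W'.length < W.length := by
  intro i
  induction i with
  | zero =>
    intro j x W hij hjW hadj
    rw [SimpleGraph.Walk.getVert_zero] at hadj
    refine ⟨SimpleGraph.Walk.cons hadj (W.drop j), ?_, ?_⟩
    · intro z hz
      rw [SimpleGraph.Walk.support_cons] at hz
      rcases List.mem_cons.mp hz with rfl | hz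
      · exact W.start_mem_support
      · exact support_drop_subset W j z hz
    · rw [SimpleGraph.Walk.length_cons, length_drop]
      omega
  | succ i ih =>
    intro j x W hij hjW hadj
    cases W with
    | nil => simp [SimpleGraph.Walk.length_nil] at hjW; omega
    | cons h p =>
      rw [SimpleGraph.Walk.length_cons] at hjW
      obtain ⟨j', rfl⟩ : ∃ j', j = j' + 1 := ⟨j - 1, by omega⟩
      rw [SimpleGraph.Walk.getVert_cons_succ, SimpleGraph.Walk.getVert_cons_succ] at hadj
      obtain ⟨W', hsub, hlen⟩ := ih j' p (by omega) (by omega) hadj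
      refine ⟨SimpleGraph.Walk.cons h W', ?_, ?_⟩
      · intro z hz
        rw [SimpleGraph.Walk.support_cons] at hz
        rcases List.mem_cons.mp hz with rfl | hz
        · simp
        · rw [SimpleGraph.Walk.support_cons]
          exact List.mem_cons_of_mem _ (hsub z hz)
      · simpa [SimpleGraph.Walk.length_cons] using hlen

/-- Minimal-length walk in a support-constrained class: it is a path without chords. -/
lemma exists_min_walk (Φ : V → Prop) {x y : V}
    (hne : ∃ W : G.Walk x y, ∀ z ∈ W.support, Φ z) :
    ∃ W : G.Walk x y, (∀ z ∈ W.support, Φ z) ∧ W.IsPath ∧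
      (∀ i j, i + 2 ≤ j → j ≤ W.length → ¬ G.Adj (W.getVert i) (W.getVert j)) := by
  classical
  have hk : ∃ k : ℕ, ∃ W : G.Walk x y, (∀ z ∈ W.support, Φ z) ∧ W.length = k := by
    obtain ⟨W, hW⟩ := hne; exact ⟨W.length, W, hW, rfl⟩
  obtain ⟨W0, hW0, hW0len⟩ := Nat.find_spec hk
  have hmin : ∀ (W' : G.Walk x y), (∀ z ∈ W'.support, Φ z) → Nat.find hk ≤ W'.length := by
    intro W' hW'
    by_contra hlt
    exact Nat.find_min hk (by omega) ⟨W', hW', rfl⟩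
  -- replace by bypass
  set W := W0.bypass with hWdef
  have hWsupp : ∀ z ∈ W.support, Φ z := fun z hz => hW0 z (W0.support_bypass_subset hz)
  have hWlen : W.length = Nat.find hk := by
    have h1 := W0.length_bypass_le
    have h2 := hmin W hWsupp
    rw [hWdef]
    exact le_antisymm (hW0len ▸ h1) h2
  refine ⟨W, hWsupp, W0.bypass_isPath, ?_⟩
  intro i j hij hjW hadj
  obtain ⟨W', hsub, hlen⟩ := chord_shortcut i j W hij hjW hadj
  have := hmin W' (fun z hz => hWsupp z (hsub z hz))
  omega




lemma mod_eq_one_iff {n d : ℕ} (hn : 2 ≤ n) (hd : d < 2 * n) :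
    d % n = 1 ↔ (d = 1 ∨ d = n + 1) := by
  rcases Nat.lt_or_ge d n with h | h
  · rw [Nat.mod_eq_of_lt h]; omega
  · rw [Nat.mod_eq_sub_mod h, Nat.mod_eq_of_lt (by omega)]; omega

lemma fin_sub_val_eq_one {n : ℕ} (hn : 2 ≤ n) (u v : Fin n) :
    (u - v).val = 1 ↔ (u.val = v.val + 1 ∨ (v.val = n - 1 ∧ u.val = 0)) := by
  have hu := u.isLt
  have hv := v.isLt
  rw [Fin.sub_def]
  simp only [Fin.val_mk]
  rw [mod_eq_one_iff hn (by omega)]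
  omega

lemma cycleGraph_adj_iff {n : ℕ} (hn : 2 ≤ n) (u v : Fin n) :
    (cycleGraph n).Adj u v ↔
      (u.val = v.val + 1 ∨ (v.val = n - 1 ∧ u.val = 0)) ∨
      (v.val = u.val + 1 ∨ (u.val = n - 1 ∧ v.val = 0)) := by
  rw [SimpleGraph.cycleGraph_adj']
  rw [fin_sub_val_eq_one hn, fin_sub_val_eq_one hn]
/-- Main chordality workhorse: there is no "hole" through two separated sets. -/
lemma no_hole (hch : IsChordal G) {s0 t0 : V} (hne : s0 ≠ t0) (hnadj : ¬ G.Adj s0 t0)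
    {A B : Set V}
    (hABadj : ∀ a ∈ A, ∀ b ∈ B, ¬ G.Adj a b)
    (hABdisj : ∀ z, z ∈ A → z ∈ B → False)
    (hs0A : s0 ∉ A) (hs0B : s0 ∉ B) (ht0A : t0 ∉ A) (ht0B : t0 ∉ B)
    (hWA : ∃ W : G.Walk s0 t0, ∀ z ∈ W.support, z ∈ A ∨ z = s0 ∨ z = t0)
    (hWB : ∃ W : G.Walk s0 t0, ∀ z ∈ W.support, z ∈ B ∨ z = s0 ∨ z = t0) :
    False := by
  classical
  obtain ⟨P1, hP1supp, hP1path, hP1chord⟩ := exists_min_walk _ hWA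
  obtain ⟨P2, hP2supp, hP2path, hP2chord⟩ := exists_min_walk _ hWB
  set l1 := P1.length with hl1def
  set l2 := P2.length with hl2def
  have hl1 : 2 ≤ l1 := by
    have h1 : 1 ≤ l1 := one_le_length_of_ne hne P1
    rcases Nat.lt_or_ge l1 2 with h | h
    · exfalso
      have : l1 = 1 := by omega
      have hadj := P1.adj_getVert_succ (i := 0) (by omega)
      rw [SimpleGraph.Walk.getVert_zero] at hadj
      have ht : P1.getVert 1 = t0 := by
        have h2 : P1.getVert l1 = t0 := P1.getVert_length
        rwa [‹l1 = 1›] at h2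
      rw [ht] at hadj
      exact hnadj hadj
    · exact h
  have hl2 : 2 ≤ l2 := by
    have h1 : 1 ≤ l2 := one_le_length_of_ne hne P2
    rcases Nat.lt_or_ge l2 2 with h | h
    · exfalso
      have : l2 = 1 := by omega
      have hadj := P2.adj_getVert_succ (i := 0) (by omega)
      rw [SimpleGraph.Walk.getVert_zero] at hadj
      have ht : P2.getVert 1 = t0 := by
        have h2 : P2.getVert l2 = t0 := P2.getVert_length
        rwa [‹l2 = 1›] at h2
      rw [ht] at hadj
      exact hnadj hadj
    · exact h
  -- membership of getVert in support
  have hmem1 : ∀ k, k ≤ l1 → P1.getVert k ∈ P1.support := fun k hk =>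
    SimpleGraph.Walk.mem_support_iff_exists_getVert.mpr ⟨k, rfl, hk⟩
  have hmem2 : ∀ k, k ≤ l2 → P2.getVert k ∈ P2.support := fun k hk =>
    SimpleGraph.Walk.mem_support_iff_exists_getVert.mpr ⟨k, rfl, hk⟩
  -- interior vertices lie in A / B
  have hint1 : ∀ k, 0 < k → k < l1 → P1.getVert k ∈ A := by
    intro k h0 hk
    rcases hP1supp _ (hmem1 k (le_of_lt hk)) with h | h | h
    · exact h
    · exfalso
      have := getVert_inj P1 hP1path k 0 (le_of_lt hk) (by omega)
        (by rw [SimpleGraph.Walk.getVert_zero, h])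
      omega
    · exfalso
      have := getVert_inj P1 hP1path k l1 (le_of_lt hk) (le_refl _)
        (by rw [P1.getVert_length, h])
      omega
  have hint2 : ∀ k, 0 < k → k < l2 → P2.getVert k ∈ B := by
    intro k h0 hk
    rcases hP2supp _ (hmem2 k (le_of_lt hk)) with h | h | h
    · exact h
    · exfalso
      have := getVert_inj P2 hP2path k 0 (le_of_lt hk) (by omega)
        (by rw [SimpleGraph.Walk.getVert_zero, h])
      omega
    · exfalso
      have := getVert_inj P2 hP2path k l2 (le_of_lt hk) (le_refl _)
        (by rw [P2.getVert_length, h])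
      omega
  set n := l1 + l2 with hndef
  have hn4 : 4 ≤ n := by omega
  set F : ℕ → V := fun i => if i ≤ l1 then P1.getVert i else P2.getVert (n - i) with hFdef
  have hF1 : ∀ i, i ≤ l1 → F i = P1.getVert i := by
    intro i hi; simp only [hFdef, if_pos hi]
  have hF2 : ∀ i, l1 ≤ i → i ≤ n → F i = P2.getVert (n - i) := by
    intro i hi hin
    rcases Nat.eq_or_lt_of_le hi with rfl | h
    · simp only [hFdef, if_pos (le_refl _)]
      have h1 : P1.getVert l1 = t0 := P1.getVert_length
      have h2 : P2.getVert (n - l1) = t0 := by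
        have : n - l1 = l2 := by omega
        rw [this]; exact P2.getVert_length
      rw [h1, h2]
    · simp only [hFdef]
      rw [if_neg (show ¬ i ≤ l1 by omega)]
  have hF0 : F 0 = s0 := by rw [hF1 0 (by omega), SimpleGraph.Walk.getVert_zero]
  have hFl1 : F l1 = t0 := by rw [hF1 l1 (le_refl _)]; exact P1.getVert_length
  -- injectivity
  have hFinj : ∀ i j, i < n → j < n → F i = F j → i = j := by
    have key : ∀ i j, i < j → j < n → F i = F j → False := by
      intro i j hij hjn hEq
      rcases le_or_gt j l1 with hj | hj
      · -- both in P1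
        rw [hF1 i (by omega), hF1 j hj] at hEq
        have := getVert_inj P1 hP1path i j (by omega) hj hEq
        omega
      · rcases le_or_gt l1 i with hi | hi
        · -- both in P2
          rw [hF2 i hi (by omega), hF2 j (by omega) (by omega)] at hEq
          have := getVert_inj P2 hP2path (n - i) (n - j) (by omega) (by omega) hEq
          omega
        · -- i in P1 strict interior or 0, j in P2 strict interior
          have hjB : F j ∈ B := by
            rw [hF2 j (by omega) (by omega)]
            exact hint2 (n - j) (by omega) (by omega)
          rcases Nat.eq_zero_or_pos i with rfl | hi0
          · rw [hF0] at hEq; rw [← hEq] at hjB; exact hs0B hjB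
          · have hiA : F i ∈ A := by
              rw [hF1 i (by omega)]; exact hint1 i hi0 hi
            rw [hEq] at hiA
            exact hABdisj _ hiA hjB
    intro i j hi hj hEq
    rcases Nat.lt_trichotomy i j with h | h | h
    · exact absurd hEq (fun hEq => key i j h hj hEq)
    · exact h
    · exact absurd hEq.symm (fun hEq => key j i h hi hEq)
  -- adjacency of consecutive
  have hFadj : ∀ i, i + 1 < n → G.Adj (F i) (F (i + 1)) := by
    intro i hi
    rcases le_or_gt (i + 1) l1 with h | h
    · rw [hF1 i (by omega), hF1 (i+1) h]
      exact P1.adj_getVert_succ (by omega)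
    · rw [hF2 i (by omega) (by omega), hF2 (i+1) (by omega) (by omega)]
      have := P2.adj_getVert_succ (i := n - (i+1)) (by omega)
      have heq : n - (i+1) + 1 = n - i := by omega
      rw [heq] at this
      exact this.symm
  have hFwrap : G.Adj (F (n - 1)) (F 0) := by
    rw [hF0, hF2 (n-1) (by omega) (by omega)]
    have := P2.adj_getVert_succ (i := 0) (by omega)
    rw [SimpleGraph.Walk.getVert_zero] at this
    have heq : n - (n - 1) = 1 := by omega
    rw [heq]
    exact this.symm
  -- non-adjacency of non-consecutive
  have hFnon : ∀ i j, i < j → j < n → j ≠ i + 1 → ¬ (i = 0 ∧ j = n - 1) →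
      ¬ G.Adj (F i) (F j) := by
    intro i j hij hjn hsucc hwrap hadj
    rcases le_or_gt j l1 with hj | hj
    · rw [hF1 i (by omega), hF1 j hj] at hadj
      exact hP1chord i j (by omega) hj hadj
    · rcases le_or_gt l1 i with hi | hi
      · rw [hF2 i hi (by omega), hF2 j (by omega) (by omega)] at hadj
        exact hP2chord (n - j) (n - i) (by omega) (by omega) hadj.symm
      · rcases Nat.eq_zero_or_pos i with rfl | hi0
        · rw [hF0, hF2 j (by omega) (by omega)] at hadj
          have hnj : n - j ≥ 2 := by omega
          have := hP2chord 0 (n - j) (by omega) (by omega)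
          rw [SimpleGraph.Walk.getVert_zero] at this
          exact this hadj
        · rw [hF1 i (by omega), hF2 j (by omega) (by omega)] at hadj
          exact hABadj _ (hint1 i hi0 hi) _ (hint2 (n - j) (by omega) (by omega)) hadj
  -- build the embedding
  have hemb : Nonempty (SimpleGraph.cycleGraph n ↪g G) := by
    refine ⟨⟨⟨fun i => F i.val, ?_⟩, ?_⟩⟩
    · intro i j hEq
      exact Fin.ext (hFinj i.val j.val i.isLt j.isLt hEq)
    · intro i j
      show G.Adj (F i.val) (F j.val) ↔ _
      rw [cycleGraph_adj_iff (by omega) i j]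
      have hi := i.isLt
      have hj := j.isLt
      constructor
      · intro hadj
        by_contra hcon
        push_neg at hcon
        obtain ⟨hc1, hc2⟩ := hcon
        rcases Nat.lt_trichotomy i.val j.val with h | h | h
        · exact hFnon i.val j.val h hj (by omega) (by omega) hadj
        · rw [show (i : Fin n) = j from Fin.ext h] at hadj
          exact G.irrefl hadj
        · exact hFnon j.val i.val h hi (by omega) (by omega) hadj.symm
      · intro hc
        rcases hc with (h | ⟨h1, h2⟩) | (h | ⟨h1, h2⟩)
        · rw [h]; exact (hFadj j.val (by omega)).symm
        · rw [h1, h2]; exact (hFwrap).symm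
        · rw [h]; exact hFadj i.val (by omega)
        · rw [h1, h2]; exact hFwrap
  exact (hch n hn4).false hemb.some
/-- `v` is simplicial relative to ground set `s`. -/
def RSimp (G : SimpleGraph V) (s : Finset V) (v : V) : Prop :=
  v ∈ s ∧ ∀ a ∈ s, ∀ b ∈ s, G.Adj v a → G.Adj v b → a ≠ b → G.Adj a b

lemma walk_support_two {a b : V} (hab : a ≠ b) (w : G.Walk a b)
    (h : ∀ z ∈ w.support, z = a ∨ z = b) : G.Adj a b := by
  cases w with
  | nil => exact absurd rfl hab
  | cons hadj p =>
    rename_i c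
    rcases h c (by simp) with rfl | rfl
    · exact absurd hadj G.irrefl
    · exact hadj

/-- Auxiliary step for Dirac's theorem. -/
lemma dirac_aux [DecidableEq V] {s : Finset V}
    (ih : ∀ t ⊂ s, (∀ a ∈ t, ∀ b ∈ t, a ≠ b → G.Adj a b) ∨
      ∃ v ∈ t, ∃ w ∈ t, v ≠ w ∧ ¬ G.Adj v w ∧ RSimp G t v ∧ RSimp G t w)
    (S X : Finset V) (hXs : X ⊆ s) (hSs : S ⊆ s)
    (hclosed : ∀ x ∈ X, ∀ y ∈ s, y ∉ S → G.Adj x y → y ∈ X)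
    (hSclique : ∀ u ∈ S, ∀ v ∈ S, u ≠ v → G.Adj u v)
    (hproper : X ∪ S ⊂ s) (p : V) (hp : p ∈ X) :
    ∃ v ∈ X, RSimp G s v := by
  classical
  have hnbr : ∀ v ∈ X, ∀ y ∈ s, G.Adj v y → y ∈ X ∪ S := by
    intro v hv y hy hadj
    by_cases hyS : y ∈ S
    · exact Finset.mem_union_right _ hyS
    · exact Finset.mem_union_left _ (hclosed v hv y hy hyS hadj)
  rcases ih (X ∪ S) hproper with hcomp | ⟨v, hv, w, hw, hvw, hnadj, hRv, hRw⟩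
  · refine ⟨p, hp, hXs hp, ?_⟩
    intro x hx y hy hax hay hxy
    exact hcomp x (hnbr p hp x hx hax) y (hnbr p hp y hy hay) hxy
  · have hone : v ∈ X ∨ w ∈ X := by
      rcases Finset.mem_union.mp hv with h1 | h1
      · exact Or.inl h1
      rcases Finset.mem_union.mp hw with h2 | h2
      · exact Or.inr h2
      · exact absurd (hSclique v h1 w h2 hvw) hnadj
    have key : ∀ u, u ∈ X → RSimp G (X ∪ S) u → ∃ v ∈ X, RSimp G s v := by
      intro u hu hR
      refine ⟨u, hu, hXs hu, ?_⟩
      intro x hx y hy hax hay hxy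
      exact hR.2 x (hnbr u hu x hx hax) y (hnbr u hu y hy hay) hax hay hxy
    rcases hone with h | h
    · exact key v h hRv
    · exact key w h hRw

/-- Dirac's theorem, strengthened form, relative to a ground set. -/
lemma dirac' (hch : IsChordal G) (s : Finset V) :
    (∀ a ∈ s, ∀ b ∈ s, a ≠ b → G.Adj a b) ∨
      ∃ v ∈ s, ∃ w ∈ s, v ≠ w ∧ ¬ G.Adj v w ∧ RSimp G s v ∧ RSimp G s w := by
  classical
  induction s using Finset.strongInduction with
  | _ s ih =>
  by_cases hcomp : ∀ a ∈ s, ∀ b ∈ s, a ≠ b → G.Adj a b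
  · exact Or.inl hcomp
  push_neg at hcomp
  obtain ⟨a, ha, b, hb, hab, hnadj⟩ := hcomp
  -- minimal cut
  set Good : Finset V → Prop := fun S =>
    S ⊆ s ∧ a ∉ S ∧ b ∉ S ∧
      ¬ ∃ w : G.Walk a b, ∀ z ∈ w.support, z ∈ s ∧ z ∉ S with hGooddef
  have hGood0 : Good (s \ {a, b}) := by
    refine ⟨Finset.sdiff_subset, by simp, by simp [hab], ?_⟩
    rintro ⟨w, hw⟩
    refine hnadj (walk_support_two hab w ?_)
    intro z hz
    have := hw z hz
    have hz2 := this.2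
    simp only [Finset.mem_sdiff, Finset.mem_insert, Finset.mem_singleton, not_and, not_not] at hz2
    have := hz2 this.1
    tauto
  have hex : ∃ k : ℕ, ∃ S : Finset V, Good S ∧ S.card = k := ⟨_, _, hGood0, rfl⟩
  obtain ⟨S, hS, hScard⟩ := Nat.find_spec hex
  have hSmin : ∀ S' : Finset V, Good S' → S.card ≤ S'.card := by
    intro S' hS'
    rw [hScard]
    by_contra hlt
    exact Nat.find_min hex (by omega) ⟨S', hS', rfl⟩
  obtain ⟨hSs, haS, hbS, hcut⟩ := hS
  -- components
  set RA : V → Prop := fun x => ∃ w : G.Walk a x, ∀ z ∈ w.support, z ∈ s ∧ z ∉ S with hRAdef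
  set RB : V → Prop := fun x => ∃ w : G.Walk b x, ∀ z ∈ w.support, z ∈ s ∧ z ∉ S with hRBdef
  set A : Finset V := s.filter (fun x => x ∉ S ∧ RA x) with hAdef
  set B : Finset V := s.filter (fun x => x ∉ S ∧ RB x) with hBdef
  have haA : a ∈ A := by
    refine Finset.mem_filter.mpr ⟨ha, haS, SimpleGraph.Walk.nil, ?_⟩
    intro z hz; simp only [SimpleGraph.Walk.support_nil, List.mem_singleton] at hz
    subst hz; exact ⟨ha, haS⟩
  have hbB : b ∈ B := by
    refine Finset.mem_filter.mpr ⟨hb, hbS, SimpleGraph.Walk.nil, ?_⟩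
    intro z hz; simp only [SimpleGraph.Walk.support_nil, List.mem_singleton] at hz
    subst hz; exact ⟨hb, hbS⟩
  have hAs : A ⊆ s := Finset.filter_subset _ _
  have hBs : B ⊆ s := Finset.filter_subset _ _
  have hAS : ∀ x ∈ A, x ∉ S := fun x hx => (Finset.mem_filter.mp hx).2.1
  have hBS : ∀ x ∈ B, x ∉ S := fun x hx => (Finset.mem_filter.mp hx).2.1
  have hAB : ∀ x, x ∈ A → x ∈ B → False := by
    intro x hxA hxB
    obtain ⟨wa, hwa⟩ := (Finset.mem_filter.mp hxA).2.2
    obtain ⟨wb, hwb⟩ := (Finset.mem_filter.mp hxB).2.2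
    refine hcut ⟨wa.append wb.reverse, ?_⟩
    intro z hz
    rcases (SimpleGraph.Walk.mem_support_append_iff _ _).mp hz with h | h
    · exact hwa z h
    · exact hwb z (by rwa [SimpleGraph.Walk.support_reverse, List.mem_reverse] at h)
  have hAclosed : ∀ x ∈ A, ∀ y ∈ s, y ∉ S → G.Adj x y → y ∈ A := by
    intro x hx y hy hyS hadj
    obtain ⟨w, hw⟩ := (Finset.mem_filter.mp hx).2.2
    refine Finset.mem_filter.mpr ⟨hy, hyS, w.concat hadj, ?_⟩
    intro z hz
    rw [SimpleGraph.Walk.support_concat, List.mem_append, List.mem_singleton] at hz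
    rcases hz with h | h
    · exact hw z h
    · subst h; exact ⟨hy, hyS⟩
  have hBclosed : ∀ x ∈ B, ∀ y ∈ s, y ∉ S → G.Adj x y → y ∈ B := by
    intro x hx y hy hyS hadj
    obtain ⟨w, hw⟩ := (Finset.mem_filter.mp hx).2.2
    refine Finset.mem_filter.mpr ⟨hy, hyS, w.concat hadj, ?_⟩
    intro z hz
    rw [SimpleGraph.Walk.support_concat, List.mem_append, List.mem_singleton] at hz
    rcases hz with h | h
    · exact hw z h
    · subst h; exact ⟨hy, hyS⟩
  have hABadj : ∀ x ∈ A, ∀ y ∈ B, ¬ G.Adj x y := by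
    intro x hx y hy hadj
    exact hAB y (hAclosed x hx y (hBs hy) (hBS y hy) hadj) hy
  -- every element of a reach-walk is in the component
  have hreachA : ∀ (x : V) (w : G.Walk a x), (∀ z ∈ w.support, z ∈ s ∧ z ∉ S) →
      ∀ z ∈ w.support, z ∈ A := by
    intro x w hw z hz
    refine Finset.mem_filter.mpr ⟨(hw z hz).1, (hw z hz).2, w.takeUntil z hz, ?_⟩
    intro y hy
    exact hw y (SimpleGraph.Walk.support_takeUntil_subset _ _ hy)
  have hreachB : ∀ (x : V) (w : G.Walk b x), (∀ z ∈ w.support, z ∈ s ∧ z ∉ S) →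
      ∀ z ∈ w.support, z ∈ B := by
    intro x w hw z hz
    refine Finset.mem_filter.mpr ⟨(hw z hz).1, (hw z hz).2, w.takeUntil z hz, ?_⟩
    intro y hy
    exact hw y (SimpleGraph.Walk.support_takeUntil_subset _ _ hy)
  -- neighbors of cut vertices
  have hpred : ∀ (X : Finset V), (∀ x ∈ X, ∀ y ∈ s, y ∉ S → G.Adj x y → y ∈ X) →
      (∀ x ∈ X, x ∉ S) → ∀ s0 ∈ S,
      ∀ {c d : V} (w : G.Walk c d), c ∈ X →
        (∀ z ∈ w.support, z ∈ s ∧ (z ∉ S ∨ z = s0)) → s0 ∈ w.support →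
        ∃ x ∈ X, G.Adj x s0 := by
    intro X hXc hXS s0 hs0 c d w
    induction w with
    | nil =>
      intro hc hsupp hmem
      simp only [SimpleGraph.Walk.support_nil, List.mem_singleton] at hmem
      subst hmem
      exact absurd hs0 (hXS _ hc)
    | cons hadj p ihp =>
      rename_i c c' d'
      intro hc hsupp hmem
      by_cases hcs : c' = s0
      · subst hcs; exact ⟨c, hc, hadj⟩
      · have hc' : c' ∈ X := by
          have h1 : c' ∈ s ∧ (c' ∉ S ∨ c' = s0) := hsupp c' (by simp)
          rcases h1.2 with h2 | h2
          · exact hXc c hc c' h1.1 h2 hadj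
          · exact absurd h2 hcs
        have hmem' : s0 ∈ p.support := by
          rcases List.mem_cons.mp (by simpa using hmem) with h | h
          · exact absurd h.symm (fun h' => (hXS _ hc) (h' ▸ hs0))
          · exact h
        exact ihp hc' (fun z hz => hsupp z (by simp [hz])) hmem'
  have hSnbr : ∀ s0 ∈ S, (∃ x ∈ A, G.Adj x s0) ∧ (∃ y ∈ B, G.Adj y s0) := by
    intro s0 hs0
    have hnotgood : ¬ Good (S.erase s0) := by
      intro hG
      have := hSmin _ hG
      have := Finset.card_erase_of_mem hs0
      have hpos : 0 < S.card := Finset.card_pos.mpr ⟨s0, hs0⟩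
      omega
    simp only [hGooddef] at hnotgood
    push_neg at hnotgood
    obtain ⟨w, hw⟩ := hnotgood (fun x hx => hSs (Finset.mem_of_mem_erase hx))
      (fun h => haS (Finset.mem_of_mem_erase h)) (fun h => hbS (Finset.mem_of_mem_erase h))
    have hwprop : ∀ z ∈ w.support, z ∈ s ∧ (z ∉ S ∨ z = s0) := by
      intro z hz
      refine ⟨(hw z hz).1, ?_⟩
      have := (hw z hz).2
      by_cases hzs : z = s0
      · exact Or.inr hzs
      · exact Or.inl (fun hzS => this (Finset.mem_erase.mpr ⟨hzs, hzS⟩))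
    have hs0mem : s0 ∈ w.support := by
      by_contra hmem
      refine hcut ⟨w, ?_⟩
      intro z hz
      refine ⟨(hwprop z hz).1, ?_⟩
      rcases (hwprop z hz).2 with h | h
      · exact h
      · exact absurd (h ▸ hz) hmem
    constructor
    · exact hpred A hAclosed hAS s0 hs0 w haA hwprop hs0mem
    · refine hpred B hBclosed hBS s0 hs0 w.reverse hbB ?_ ?_
      · intro z hz
        exact hwprop z (by rwa [SimpleGraph.Walk.support_reverse, List.mem_reverse] at hz)
      · rwa [SimpleGraph.Walk.support_reverse, List.mem_reverse]
  -- S is a clique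
  have hSclique : ∀ u ∈ S, ∀ v ∈ S, u ≠ v → G.Adj u v := by
    intro s0 hs0 t0 ht0 hne'
    by_contra hnadj'
    obtain ⟨⟨xA, hxA, hxAadj⟩, -⟩ := hSnbr s0 hs0
    obtain ⟨⟨yA, hyA, hyAadj⟩, -⟩ := hSnbr t0 ht0
    obtain ⟨-, ⟨xB, hxB, hxBadj⟩⟩ := hSnbr s0 hs0
    obtain ⟨-, ⟨yB, hyB, hyBadj⟩⟩ := hSnbr t0 ht0
    have hWA : ∃ W : G.Walk s0 t0, ∀ z ∈ W.support, z ∈ (↑A : Set V) ∨ z = s0 ∨ z = t0 := by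
      obtain ⟨wx, hwx⟩ := (Finset.mem_filter.mp hxA).2.2
      obtain ⟨wy, hwy⟩ := (Finset.mem_filter.mp hyA).2.2
      refine ⟨SimpleGraph.Walk.cons hxAadj.symm ((wx.reverse.append wy).concat hyAadj), ?_⟩
      intro z hz
      rw [SimpleGraph.Walk.support_cons, List.mem_cons] at hz
      rcases hz with rfl | hz
      · exact Or.inr (Or.inl rfl)
      rw [SimpleGraph.Walk.support_concat, List.mem_append, List.mem_singleton] at hz
      rcases hz with hz | rfl
      · left
        rcases (SimpleGraph.Walk.mem_support_append_iff _ _).mp hz with h | h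
        · have : z ∈ wx.support := by rwa [SimpleGraph.Walk.support_reverse, List.mem_reverse] at h
          exact hreachA _ wx hwx z this
        · exact hreachA _ wy hwy z h
      · exact Or.inr (Or.inr rfl)
    have hWB : ∃ W : G.Walk s0 t0, ∀ z ∈ W.support, z ∈ (↑B : Set V) ∨ z = s0 ∨ z = t0 := by
      obtain ⟨wx, hwx⟩ := (Finset.mem_filter.mp hxB).2.2
      obtain ⟨wy, hwy⟩ := (Finset.mem_filter.mp hyB).2.2
      refine ⟨SimpleGraph.Walk.cons hxBadj.symm ((wx.reverse.append wy).concat hyBadj), ?_⟩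
      intro z hz
      rw [SimpleGraph.Walk.support_cons, List.mem_cons] at hz
      rcases hz with rfl | hz
      · exact Or.inr (Or.inl rfl)
      rw [SimpleGraph.Walk.support_concat, List.mem_append, List.mem_singleton] at hz
      rcases hz with hz | rfl
      · left
        rcases (SimpleGraph.Walk.mem_support_append_iff _ _).mp hz with h | h
        · have : z ∈ wx.support := by rwa [SimpleGraph.Walk.support_reverse, List.mem_reverse] at h
          exact hreachB _ wx hwx z this
        · exact hreachB _ wy hwy z h
      · exact Or.inr (Or.inr rfl)
    exact no_hole hch hne' hnadj'
      (fun a' ha' b' hb' => hABadj a' ha' b' hb')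
      (fun z hz hz' => hAB z hz hz')
      (fun h => hAS s0 h hs0) (fun h => hBS s0 h hs0)
      (fun h => hAS t0 h ht0) (fun h => hBS t0 h ht0) hWA hWB
  -- recurse on both sides
  have hproperA : A ∪ S ⊂ s := by
    refine Finset.ssubset_iff_of_subset (Finset.union_subset hAs hSs) |>.mpr ?_
    exact ⟨b, hb, by
      simp only [Finset.mem_union]
      rintro (h | h)
      · exact hAB b h hbB
      · exact hbS h⟩
  have hproperB : B ∪ S ⊂ s := by
    refine Finset.ssubset_iff_of_subset (Finset.union_subset hBs hSs) |>.mpr ?_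
    exact ⟨a, ha, by
      simp only [Finset.mem_union]
      rintro (h | h)
      · exact hAB a haA h
      · exact haS h⟩
  obtain ⟨v, hvA, hvR⟩ := dirac_aux ih S A hAs hSs hAclosed hSclique hproperA a haA
  obtain ⟨w, hwB, hwR⟩ := dirac_aux ih S B hBs hSs hBclosed hSclique hproperB b hbB
  refine Or.inr ⟨v, hAs hvA, w, hBs hwB, ?_, ?_, hvR, hwR⟩
  · intro h; exact hAB v hvA (h ▸ hwB)
  · intro h; exact hABadj v hvA w hwB h

/-- Dirac's theorem: every nonempty ground set in a chordal graph has a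
relative simplicial vertex. -/
lemma dirac (hch : IsChordal G) (s : Finset V) (hs : s.Nonempty) :
    ∃ v, RSimp G s v := by
  rcases dirac' hch s with h | ⟨v, _, _, _, _, _, hv, _⟩
  · obtain ⟨v, hv⟩ := hs
    exact ⟨v, hv, fun a ha b hb hva hvb hab => h a ha b hb hab⟩
  · exact ⟨v, hv⟩
/-- Rerouting a walk to avoid a relatively simplicial vertex. -/
lemma walk_avoid {s : Finset V} {v : V}
    (hsimp : ∀ a ∈ s, ∀ b ∈ s, G.Adj v a → G.Adj v b → a ≠ b → G.Adj a b)
    {F : Set V} (hFs : ∀ z ∈ F, z ∈ s) :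
    ∀ (n : ℕ) {x y : V} (w : G.Walk x y), w.length ≤ n → x ≠ v → y ≠ v →
      (∀ z ∈ w.support, z ∈ F) →
      ∃ w' : G.Walk x y, ∀ z ∈ w'.support, z ∈ F ∧ z ≠ v := by
  intro n
  induction n with
  | zero =>
    intro x y w hlen hx hy hsupp
    cases w with
    | nil => exact ⟨SimpleGraph.Walk.nil, by
        intro z hz
        simp only [SimpleGraph.Walk.support_nil, List.mem_singleton] at hz
        subst hz
        exact ⟨hsupp _ (by simp), hx⟩⟩
    | cons h p => simp [SimpleGraph.Walk.length_cons] at hlen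
  | succ n ih =>
    intro x y w hlen hx hy hsupp
    cases w with
    | nil => exact ⟨SimpleGraph.Walk.nil, by
        intro z hz
        simp only [SimpleGraph.Walk.support_nil, List.mem_singleton] at hz
        subst hz
        exact ⟨hsupp _ (by simp), hx⟩⟩
    | cons h p =>
      rename_i c
      rw [SimpleGraph.Walk.length_cons] at hlen
      by_cases hcv : c = v
      · rw [hcv] at h
        cases p with
        | nil => exact absurd hcv hy
        | cons h2 p2 =>
          rename_i c2
          rw [hcv] at h2
          rw [SimpleGraph.Walk.length_cons] at hlen
          have hc2v : c2 ≠ v := fun hc => G.irrefl (hc ▸ h2)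
          have hc2F : c2 ∈ F := hsupp c2 (by simp)
          have hsupp2 : ∀ z ∈ p2.support, z ∈ F := fun z hz => hsupp z (by simp [hz])
          obtain ⟨p2', hp2'⟩ := ih p2 (by omega) hc2v hy hsupp2
          by_cases hxc2 : x = c2
          · subst hxc2
            exact ⟨p2', hp2'⟩
          · have hadj : G.Adj x c2 :=
              hsimp x (hFs x (hsupp x (by simp))) c2 (hFs c2 hc2F) h.symm h2 hxc2
            refine ⟨SimpleGraph.Walk.cons hadj p2', ?_⟩
            intro z hz
            rw [SimpleGraph.Walk.support_cons, List.mem_cons] at hz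
            rcases hz with rfl | hz
            · exact ⟨hsupp z (by simp), hx⟩
            · exact hp2' z hz
      · have hsupp2 : ∀ z ∈ p.support, z ∈ F := fun z hz => hsupp z (by simp [hz])
        obtain ⟨p', hp'⟩ := ih p (by omega) hcv hy hsupp2
        refine ⟨SimpleGraph.Walk.cons h p', ?_⟩
        intro z hz
        rw [SimpleGraph.Walk.support_cons, List.mem_cons] at hz
        rcases hz with rfl | hz
        · exact ⟨hsupp z (by simp), hx⟩
        · exact hp' z hz

/-- In a connected set containing `v` and another vertex, `v` has a neighbor in the set. -/
lemma exists_nbr_in {F : Set V} (hF : ∀ x ∈ F, ∀ y ∈ F, ∃ w : G.Walk x y,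
    ∀ z ∈ w.support, z ∈ F) {v u : V} (hv : v ∈ F) (hu : u ∈ F) (hne : u ≠ v) :
    ∃ c ∈ F, c ≠ v ∧ G.Adj v c := by
  obtain ⟨w, hw⟩ := hF v hv u hu
  cases w with
  | nil => exact absurd rfl hne
  | cons h p =>
    rename_i c
    exact ⟨c, hw c (by simp), fun hc => G.irrefl (hc ▸ h), h⟩

/-- Helly-type property: pairwise touching connected subsets of a chordal graph
have a common clique transversal. -/
lemma helly (hch : IsChordal G) (s : Finset V) (Fam : Set (Set V))
    (hne : ∀ F ∈ Fam, F.Nonempty)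
    (hsub : ∀ F ∈ Fam, ∀ z ∈ F, z ∈ s)
    (hconn : ∀ F ∈ Fam, ∀ x ∈ F, ∀ y ∈ F, ∃ w : G.Walk x y, ∀ z ∈ w.support, z ∈ F)
    (htouch : ∀ F ∈ Fam, ∀ F' ∈ Fam, ∃ a ∈ F, ∃ b ∈ F', a = b ∨ G.Adj a b) :
    ∃ K : Set V, G.IsClique K ∧ ∀ F ∈ Fam, ∃ x ∈ K, x ∈ F := by
  classical
  induction s using Finset.strongInduction generalizing Fam with
  | _ s ih =>
  rcases Set.eq_empty_or_nonempty Fam with rfl | hFamne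
  · exact ⟨∅, by simp, by simp⟩
  obtain ⟨F0, hF0⟩ := hFamne
  obtain ⟨z0, hz0⟩ := hne F0 hF0
  have hsne : s.Nonempty := ⟨z0, hsub F0 hF0 z0 hz0⟩
  obtain ⟨v, hvs, hsimp⟩ := dirac hch s hsne
  by_cases hsing : ∃ F ∈ Fam, F = {v}
  · obtain ⟨F1, hF1, rfl⟩ := hsing
    refine ⟨{v} ∪ {u | u ∈ s ∧ G.Adj v u}, ?_, ?_⟩
    · intro x hx y hy hxy
      rcases hx with rfl | ⟨hxs, hxadj⟩
      · rcases hy with rfl | ⟨hys, hyadj⟩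
        · exact absurd rfl hxy
        · exact hyadj
      · rcases hy with rfl | ⟨hys, hyadj⟩
        · exact hxadj.symm
        · exact hsimp x hxs y hys hxadj hyadj hxy
    · intro F hF
      obtain ⟨a, ha, b, hb, hab⟩ := htouch F hF {v} hF1
      rw [Set.mem_singleton_iff] at hb
      subst hb
      rcases hab with rfl | hadj
      · exact ⟨a, Or.inl rfl, ha⟩
      · exact ⟨a, Or.inr ⟨hsub F hF a ha, hadj.symm⟩, ha⟩
  · -- remove v from every member and recurse
    push_neg at hsing
    have hvnbr : ∀ F ∈ Fam, v ∈ F → ∃ c ∈ F, c ≠ v ∧ G.Adj v c := by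
      intro F hF hvF
      have : ∃ u ∈ F, u ≠ v := by
        by_contra hcon
        push_neg at hcon
        refine hsing F hF ?_
        ext u
        simp only [Set.mem_singleton_iff]
        exact ⟨fun hu => hcon u hu, fun hu => hu ▸ hvF⟩
      obtain ⟨u, huF, huv⟩ := this
      exact exists_nbr_in (hconn F hF) hvF huF huv
    set Fam' : Set (Set V) := (fun F => F \ {v}) '' Fam with hFam'def
    have key := ih (s.erase v) (Finset.erase_ssubset hvs) Fam' ?_ ?_ ?_ ?_
    · obtain ⟨K, hK, hKt⟩ := key
      refine ⟨K, hK, ?_⟩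
      intro F hF
      obtain ⟨x, hxK, hxF⟩ := hKt (F \ {v}) ⟨F, hF, rfl⟩
      exact ⟨x, hxK, hxF.1⟩
    · rintro F' ⟨F, hF, rfl⟩
      by_cases hvF : v ∈ F
      · obtain ⟨c, hc, hcv, -⟩ := hvnbr F hF hvF
        exact ⟨c, hc, hcv⟩
      · obtain ⟨u, hu⟩ := hne F hF
        exact ⟨u, hu, fun h => hvF (h ▸ hu)⟩
    · rintro F' ⟨F, hF, rfl⟩ z hz
      exact Finset.mem_erase.mpr ⟨hz.2, hsub F hF z hz.1⟩
    · rintro F' ⟨F, hF, rfl⟩ x hx y hy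
      obtain ⟨w, hw⟩ := hconn F hF x hx.1 y hy.1
      obtain ⟨w', hw'⟩ := walk_avoid hsimp (hsub F hF) w.length w (le_refl _)
        hx.2 hy.2 hw
      exact ⟨w', fun z hz => ⟨(hw' z hz).1, (hw' z hz).2⟩⟩
    · rintro F1' ⟨F1, hF1, rfl⟩ F2' ⟨F2, hF2, rfl⟩
      obtain ⟨a, ha, b, hb, hab⟩ := htouch F1 hF1 F2 hF2
      have hget : ∀ (F : Set V), F ∈ Fam → v ∈ F → ∃ c, c ∈ F \ {v} ∧ G.Adj v c := by
        intro F hF hvF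
        obtain ⟨c, hc, hcv, hadj⟩ := hvnbr F hF hvF
        exact ⟨c, ⟨hc, hcv⟩, hadj⟩
      rcases hab with rfl | hadj
      · -- common vertex
        by_cases hav : a = v
        · obtain ⟨c1, hc1, hadj1⟩ := hget F1 hF1 (hav ▸ ha)
          obtain ⟨c2, hc2, hadj2⟩ := hget F2 hF2 (hav ▸ hb)
          by_cases hc : c1 = c2
          · exact ⟨c1, hc1, c2, hc2, Or.inl hc⟩
          · exact ⟨c1, hc1, c2, hc2, Or.inr (hsimp c1
              (hsub F1 hF1 c1 hc1.1) c2 (hsub F2 hF2 c2 hc2.1) hadj1 hadj2 hc)⟩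
        · exact ⟨a, ⟨ha, hav⟩, a, ⟨hb, hav⟩, Or.inl rfl⟩
      · by_cases hav : a = v
        · obtain ⟨c1, hc1, hadj1⟩ := hget F1 hF1 (hav ▸ ha)
          have hadjvb : G.Adj v b := hav ▸ hadj
          have hbv : b ≠ v := fun h => G.irrefl (h ▸ hadjvb)
          by_cases hc : c1 = b
          · exact ⟨c1, hc1, b, ⟨hb, hbv⟩, Or.inl hc⟩
          · exact ⟨c1, hc1, b, ⟨hb, hbv⟩, Or.inr (hsimp c1
              (hsub F1 hF1 c1 hc1.1) b (hsub F2 hF2 b hb) hadj1 hadjvb hc)⟩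
        · by_cases hbv : b = v
          · obtain ⟨c2, hc2, hadj2⟩ := hget F2 hF2 (hbv ▸ hb)
            have hadjva : G.Adj v a := (hbv ▸ hadj.symm)
            by_cases hc : a = c2
            · exact ⟨a, ⟨ha, hav⟩, c2, hc2, Or.inl hc⟩
            · exact ⟨a, ⟨ha, hav⟩, c2, hc2, Or.inr (hsimp a
                (hsub F1 hF1 a ha) c2 (hsub F2 hF2 c2 hc2.1) hadjva hadj2 hc)⟩
          · exact ⟨a, ⟨ha, hav⟩, b, ⟨hb, hbv⟩, Or.inr hadj⟩
/-- Every walk ending in `Q` has a prefix meeting `Q` exactly at its endpoint. -/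
lemma exists_prefix (Q : Set V) {c d : V} (w : G.Walk c d) (hd : d ∈ Q) :
      ∃ y, y ∈ Q ∧ ∃ R : G.Walk c y, (∀ z ∈ R.support, z ∈ Q → z = y) ∧
        (∀ z ∈ R.support, z ∈ w.support) := by
  induction w with
  | nil =>
    refine ⟨_, hd, SimpleGraph.Walk.nil, ?_, ?_⟩
    · intro z hz _
      simpa using hz
    · intro z hz; exact hz
  | cons h p ihp =>
    rename_i c₁ c₂ d₁
    by_cases hc : c₁ ∈ Q
    · refine ⟨c₁, hc, SimpleGraph.Walk.nil, ?_, ?_⟩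
      · intro z hz _; simpa using hz
      · intro z hz
        simp only [SimpleGraph.Walk.support_nil, List.mem_singleton] at hz
        simp [hz]
    · obtain ⟨y, hy, R, hR1, hR2⟩ := ihp hd
      refine ⟨y, hy, SimpleGraph.Walk.cons h R, ?_, ?_⟩
      · intro z hz hzQ
        rw [SimpleGraph.Walk.support_cons, List.mem_cons] at hz
        rcases hz with rfl | hz
        · exact absurd hzQ hc
        · exact hR1 z hz hzQ
      · intro z hz
        rw [SimpleGraph.Walk.support_cons, List.mem_cons] at hz
        rw [SimpleGraph.Walk.support_cons, List.mem_cons]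
        rcases hz with rfl | hz
        · exact Or.inl rfl
        · exact Or.inr (hR2 z hz)

/-- Two longest paths in a connected graph share a vertex. -/
lemma longest_paths_intersect (hG : G.Connected) {u v a b : V}
    {p : G.Walk u v} {q : G.Walk a b}
    (hp : p.IsPath) (hpmax : ∀ ⦃c d : V⦄ (r : G.Walk c d), r.IsPath → r.length ≤ p.length)
    (hq : q.IsPath) (hqmax : ∀ ⦃c d : V⦄ (r : G.Walk c d), r.IsPath → r.length ≤ q.length) :
    ∃ x, x ∈ p.support ∧ x ∈ q.support := by
  classical
  by_contra hdisj
  push_neg at hdisj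
  have hlen : q.length = p.length := le_antisymm (hpmax q hq) (hqmax p hp)
  obtain ⟨w0⟩ := hG.preconnected u a
  obtain ⟨y, hyQ, R1, hR1Q, -⟩ :=
    exists_prefix {z | z ∈ q.support} w0 (by simp : a ∈ {z | z ∈ q.support})
  obtain ⟨x, hxP, R2, hR2P, hR2sub⟩ :=
    exists_prefix {z | z ∈ p.support} R1.reverse (by simp : u ∈ {z | z ∈ p.support})
  set R : G.Walk x y := R2.reverse.bypass with hRdef
  have hRsub : ∀ z ∈ R.support, z ∈ R2.support := by
    intro z hz
    have := R2.reverse.support_bypass_subset hz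
    rwa [SimpleGraph.Walk.support_reverse, List.mem_reverse] at this
  have hRP : ∀ z ∈ R.support, z ∈ p.support → z = x := by
    intro z hz hzp
    exact hR2P z (hRsub z hz) hzp
  have hRQ : ∀ z ∈ R.support, z ∈ q.support → z = y := by
    intro z hz hzq
    refine hR1Q z ?_ hzq
    have := hR2sub z (hRsub z hz)
    rwa [SimpleGraph.Walk.support_reverse, List.mem_reverse] at this
  have hRpath : R.IsPath := SimpleGraph.Walk.bypass_isPath _
  have hxy : x ≠ y := by
    intro h
    exact hdisj x hxP (h ▸ hyQ)
  have hRlen : 1 ≤ R.length := one_le_length_of_ne hxy R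
  have final : ∀ {u' b' : V} (A : G.Walk u' x) (B : G.Walk y b'), A.IsPath → B.IsPath →
      (∀ z ∈ A.support, z ∈ p.support) → (∀ z ∈ B.support, z ∈ q.support) →
      p.length ≤ 2 * A.length → q.length ≤ 2 * B.length → False := by
    intro u' b' A B hA hB hAsub hBsub hA2 hB2
    have hRB : (R.append B).IsPath := by
      refine isPath_append hRpath hB ?_
      intro z hz hz'
      exact hRQ z hz (hBsub z hz')
    have hW : (A.append (R.append B)).IsPath := by
      refine isPath_append hA hRB ?_
      intro z hz hz'
      rcases (SimpleGraph.Walk.mem_support_append_iff _ _).mp hz' with h | h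
      · exact hRP z h (hAsub z hz)
      · exact absurd (hBsub z h) (hdisj z (hAsub z hz))
    have hWlen := hpmax _ hW
    rw [SimpleGraph.Walk.length_append, SimpleGraph.Walk.length_append] at hWlen
    omega
  have hx : x ∈ p.support := hxP
  have hy : y ∈ q.support := hyQ
  have hsplitp : (p.takeUntil x hx).length + (p.dropUntil x hx).length = p.length := by
    rw [← SimpleGraph.Walk.length_append, SimpleGraph.Walk.take_spec]
  have hsplitq : (q.takeUntil y hy).length + (q.dropUntil y hy).length = q.length := by
    rw [← SimpleGraph.Walk.length_append, SimpleGraph.Walk.take_spec]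
  have hAcase : ∀ hsel : (p.takeUntil x hx).length ≤ (p.dropUntil x hx).length ∨
      (p.dropUntil x hx).length ≤ (p.takeUntil x hx).length, True := fun _ => trivial
  -- choose halves
  rcases le_total (p.takeUntil x hx).length (p.dropUntil x hx).length with hple | hple <;>
  rcases le_total (q.takeUntil y hy).length (q.dropUntil y hy).length with hqle | hqle
  · exact final (p.dropUntil x hx).reverse (q.dropUntil y hy)
      (hp.dropUntil hx).reverse (hq.dropUntil hy)
      (fun z hz => SimpleGraph.Walk.support_dropUntil_subset _ hx
        (by rwa [SimpleGraph.Walk.support_reverse, List.mem_reverse] at hz))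
      (fun z hz => SimpleGraph.Walk.support_dropUntil_subset _ hy hz)
      (by rw [SimpleGraph.Walk.length_reverse]; omega) (by omega)
  · exact final (p.dropUntil x hx).reverse (q.takeUntil y hy).reverse
      (hp.dropUntil hx).reverse (hq.takeUntil hy).reverse
      (fun z hz => SimpleGraph.Walk.support_dropUntil_subset _ hx
        (by rwa [SimpleGraph.Walk.support_reverse, List.mem_reverse] at hz))
      (fun z hz => SimpleGraph.Walk.support_takeUntil_subset _ hy
        (by rwa [SimpleGraph.Walk.support_reverse, List.mem_reverse] at hz))
      (by rw [SimpleGraph.Walk.length_reverse]; omega)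
      (by rw [SimpleGraph.Walk.length_reverse]; omega)
  · exact final (p.takeUntil x hx) (q.dropUntil y hy)
      (hp.takeUntil hx) (hq.dropUntil hy)
      (fun z hz => SimpleGraph.Walk.support_takeUntil_subset _ hx hz)
      (fun z hz => SimpleGraph.Walk.support_dropUntil_subset _ hy hz)
      (by omega) (by omega)
  · exact final (p.takeUntil x hx) (q.takeUntil y hy).reverse
      (hp.takeUntil hx) (hq.takeUntil hy).reverse
      (fun z hz => SimpleGraph.Walk.support_takeUntil_subset _ hx hz)
      (fun z hz => SimpleGraph.Walk.support_takeUntil_subset _ hy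
        (by rwa [SimpleGraph.Walk.support_reverse, List.mem_reverse] at hz))
      (by omega)
      (by rw [SimpleGraph.Walk.length_reverse]; omega)

end LPT

/-- Every connected chordal graph has a clique that is a longest path transversal. -/
theorem stmt_8 {V : Type*} [Fintype V] (G : SimpleGraph V) (hG : G.Connected)
    (hchordal : IsChordal G) :
    ∃ K : Set V, G.IsClique K ∧ IsLPTransversal G K := by
  classical
  have key := LPT.helly hchordal Finset.univ
    {S | ∃ (u v : V) (p : G.Walk u v), IsLongestPath G p ∧ S = {z | z ∈ p.support}}
    ?_ ?_ ?_ ?_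
  · obtain ⟨K, hK, hKt⟩ := key
    refine ⟨K, hK, ?_⟩
    intro u v p hp
    obtain ⟨x, hxK, hxp⟩ := hKt {z | z ∈ p.support} ⟨u, v, p, hp, rfl⟩
    exact ⟨x, hxK, hxp⟩
  · rintro F ⟨u, v, p, hp, rfl⟩
    exact ⟨u, by simp⟩
  · rintro F ⟨u, v, p, hp, rfl⟩ z hz
    exact Finset.mem_univ z
  · rintro F ⟨u, v, p, hp, rfl⟩ x hx y hy
    refine ⟨(p.takeUntil x hx).reverse.append (p.takeUntil y hy), ?_⟩
    intro z hz
    rcases (SimpleGraph.Walk.mem_support_append_iff _ _).mp hz with h | h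
    · rw [SimpleGraph.Walk.support_reverse, List.mem_reverse] at h
      exact SimpleGraph.Walk.support_takeUntil_subset _ hx h
    · exact SimpleGraph.Walk.support_takeUntil_subset _ hy h
  · rintro F ⟨u1, v1, p1, hp1, rfl⟩ F' ⟨u2, v2, p2, hp2, rfl⟩
    obtain ⟨x, hx1, hx2⟩ := LPT.longest_paths_intersect hG hp1.1 hp1.2 hp2.1 hp2.2
    exact ⟨x, hx1, x, hx2, Or.inl rfl⟩
end

section
/- Let G be a connected chordal graph, K a clique in G that is a longest path transversal, B ⊆ V(G) \ K, and D ⊆ K a minimal subset dominating B. For each d ∈ D fix a private neighbor d′ ∈ B (a vertex adjacent to d but to no other vertex of D). Then the private neighbors {d′ : d ∈ D} form an independent set, and D together with its private neighbors induces a copy of K_|D| ⋈ K̄_|D| in G. -/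
open SimpleGraph

/-- In a connected chordal graph, private neighbors of a minimal dominating subset of a
clique form an independent set, and together with the dominating set they induce a copy
of `K_|D| ⋈ K̄_|D|`. -/
theorem stmt_10 {V : Type*} [Fintype V] [DecidableEq V] (G : SimpleGraph V)
    (hG : G.Connected) (hchordal : IsChordal G)
    (K : Finset V) (hK : G.IsClique ↑K) (hKlpt : IsLPTransversal G ↑K)
    (B : Set V) (hB : B ⊆ (↑K : Set V)ᶜ)
    (D : Finset V) (hDK : D ⊆ K)
    (hDdom : Dominates G ↑D B)
    (hDmin : ∀ D' ⊆ D, Dominates G ↑D' B → D' = D)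
    (f : V → V)
    (hf : ∀ d ∈ D, f d ∈ B ∧ G.Adj d (f d) ∧ ∀ e ∈ D, e ≠ d → ¬ G.Adj e (f d)) :
    (∀ d ∈ D, ∀ e ∈ D, d ≠ e → ¬ G.Adj (f d) (f e)) ∧
    ∃ φ : kMatchK D.card ↪g G,
      Set.range φ = ↑D ∪ f '' ↑D ∧
      (∀ i : Fin D.card, φ (Sum.inl i) ∈ D ∧ φ (Sum.inr i) = f (φ (Sum.inl i))) := by
  classical
  have hind : ∀ d ∈ D, ∀ e ∈ D, d ≠ e → ¬ G.Adj (f d) (f e) := by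
    intro d hd e he hde hadj
    obtain ⟨hdB, hdA, hdP⟩ := hf d hd
    obtain ⟨heB, heA, heP⟩ := hf e he
    have hKd : d ∈ (↑K : Set V) := hDK hd
    have hKe : e ∈ (↑K : Set V) := hDK he
    have hdfe : d ≠ f e := fun h => (hB heB) (h ▸ hKd)
    have hefd : e ≠ f d := fun h => (hB hdB) (h ▸ hKe)
    have hdfd : d ≠ f d := G.ne_of_adj hdA
    have hefe : e ≠ f e := G.ne_of_adj heA
    have hfdfe : f d ≠ f e := G.ne_of_adj hadj
    have hdeA : G.Adj d e := hK hKd hKe hde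
    have hndfe : ¬ G.Adj d (f e) := heP d hd hde
    have hnfed : ¬ G.Adj (f e) d := fun h => hndfe h.symm
    have hnefd : ¬ G.Adj e (f d) := hdP e he (Ne.symm hde)
    have hnfde : ¬ G.Adj (f d) e := fun h => hnefd h.symm
    let v : Fin 4 → V := ![d, f d, f e, e]
    have hinj : Function.Injective v := by
      intro x y hxy
      fin_cases x <;> fin_cases y <;>
        simp_all [v, hde.symm, hdfe.symm, hefd.symm, hdfd.symm, hefe.symm, hfdfe.symm,
          hde, hdfe, hefd, hdfd, hefe, hfdfe]
    have emb : SimpleGraph.cycleGraph 4 ↪g G := by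
      refine ⟨⟨v, hinj⟩, ?_⟩
      intro x y
      fin_cases x <;> fin_cases y <;>
        simp [v, cycleGraph_adj (n := 2), hdA, heA, hadj, hdeA, hdA.symm, heA.symm,
          hadj.symm, hdeA.symm, hndfe, hnefd, hnfed, hnfde] <;> decide
    exact (hchordal 4 le_rfl).false emb
  refine ⟨hind, ?_⟩
  let g : Fin D.card → V := fun i => (D.equivFin.symm i : V)
  have hgD : ∀ i, g i ∈ D := fun i => (D.equivFin.symm i).2
  have ginj : Function.Injective g :=
    fun i j h => D.equivFin.symm.injective (Subtype.ext h)
  have fnotD : ∀ i j, f (g i) ≠ g j := by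
    intro i j h
    exact (hB (hf (g i) (hgD i)).1) (h ▸ (hDK (hgD j) : g j ∈ (↑K : Set V)))
  have finj : ∀ i j : Fin D.card, f (g i) = f (g j) → i = j := by
    intro i j h
    by_contra hij
    have hgij : g j ≠ g i := fun h' => hij (ginj h').symm
    have := (hf (g i) (hgD i)).2.2 (g j) (hgD j) hgij
    exact this (h ▸ (hf (g j) (hgD j)).2.1)
  let φf : Fin D.card ⊕ Fin D.card → V := Sum.elim g (fun i => f (g i))
  have φinj : Function.Injective φf := by
    intro x y h
    rcases x with i | i <;> rcases y with j | j
    · exact congrArg Sum.inl (ginj h)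
    · exact absurd h.symm (fnotD j i)
    · exact absurd h (fnotD i j)
    · exact congrArg Sum.inr (finj i j h)
  have hrel : ∀ x y, G.Adj (φf x) (φf y) ↔ (kMatchK D.card).Adj x y := by
    intro x y
    rcases x with i | i <;> rcases y with j | j <;>
      simp only [φf, Sum.elim_inl, Sum.elim_inr, kMatchK, fromRel_adj]
    · constructor
      · intro h
        refine ⟨fun h' => G.ne_of_adj h (by injection h' with h'; rw [h']), ?_⟩
        exact Or.inl (Or.inl ⟨i, j, rfl, rfl⟩)
      · rintro ⟨hne, -⟩
        have hij : i ≠ j := fun h => hne (by rw [h])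
        exact hK (hDK (hgD i)) (hDK (hgD j)) (fun h => hij (ginj h))
    · constructor
      · intro h
        have hij : i = j := by
          by_contra hij
          have hgij : g i ≠ g j := fun h' => hij (ginj h')
          exact (hf (g j) (hgD j)).2.2 (g i) (hgD i) hgij h
        subst hij
        exact ⟨by simp, Or.inl (Or.inr ⟨i, rfl, rfl⟩)⟩
      · rintro ⟨-, h⟩
        have hij : i = j := by
          rcases h with (⟨a, b, _, hb⟩ | ⟨a, ha, hb⟩) | (⟨a, b, ha, _⟩ | ⟨a, ha, hb⟩)
          · exact absurd hb (by simp)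
          · injection ha with ha; injection hb with hb; rw [ha, hb]
          · exact absurd ha (by simp)
          · exact absurd ha (by simp)
        subst hij
        exact (hf (g i) (hgD i)).2.1
    · constructor
      · intro h
        have hij : j = i := by
          by_contra hij
          have hgij : g j ≠ g i := fun h' => hij (ginj h')
          exact (hf (g i) (hgD i)).2.2 (g j) (hgD j) hgij h.symm
        subst hij
        exact ⟨by simp, Or.inr (Or.inr ⟨j, rfl, rfl⟩)⟩
      · rintro ⟨-, h⟩
        have hij : j = i := by
          rcases h with (⟨a, b, ha, _⟩ | ⟨a, ha, hb⟩) | (⟨a, b, _, hb⟩ | ⟨a, ha, hb⟩)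
          · exact absurd ha (by simp)
          · exact absurd ha (by simp)
          · exact absurd hb (by simp)
          · injection ha with ha; injection hb with hb; rw [ha, hb]
        subst hij
        exact ((hf (g j) (hgD j)).2.1).symm
    · constructor
      · intro h
        exfalso
        have hij : i ≠ j := fun h' => G.irrefl (h' ▸ h)
        exact hind (g i) (hgD i) (g j) (hgD j) (fun h' => hij (ginj h')) h
      · rintro ⟨-, h⟩
        exfalso
        rcases h with (⟨a, b, ha, _⟩ | ⟨a, ha, _⟩) | (⟨a, b, ha, _⟩ | ⟨a, ha, _⟩) <;>
          exact absurd ha (by simp)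
  refine ⟨⟨⟨φf, φinj⟩, fun {x y} => hrel x y⟩, ?_, fun i => ⟨hgD i, rfl⟩⟩
  show Set.range φf = ↑D ∪ f '' ↑D
  have hrg : Set.range g = ↑D := by
    ext x
    constructor
    · rintro ⟨i, rfl⟩; exact hgD i
    · intro hx; exact ⟨D.equivFin ⟨x, hx⟩, by simp [g]⟩
  rw [show φf = Sum.elim g (f ∘ g) from rfl, Set.Sum.elim_range, hrg,
    Set.range_comp, hrg]
end

section
/- Let G be a connected graph with a tree decomposition (T, 𝒳)-like structure induced from an H-representation: suppose there is a tree T and for each vertex v of G a nonempty subtree T_v of T, such that whenever u and v lie on a common path of G (in particular whenever they are adjacent) the union of the subtrees along the path is connected, and adjacent vertices have intersecting subtrees. Then there exists a node t of T such that the set {v ∈ V(G) : t ∈ V(T_v)} intersects every longest path of G. -/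
open SimpleGraph

private lemma myIsPath_append {V : Type*} {G : SimpleGraph V} {u v w : V}
    {p : G.Walk u v} {q : G.Walk v w} (hp : p.IsPath) (hq : q.IsPath)
    (h : ∀ z, z ∈ p.support → z ∈ q.support → z = v) : (p.append q).IsPath := by
  rw [Walk.isPath_def, Walk.support_append]
  refine List.Nodup.append hp.support_nodup (hq.support_nodup.tail) ?_
  intro z hz hz'
  have hzq : z ∈ q.support := by
    rw [q.support_eq_cons]; exact List.mem_cons_of_mem _ hz'
  have hzv : z = v := h z hz hzq
  subst hzv
  have := hq.support_nodup
  rw [q.support_eq_cons] at this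
  exact (List.nodup_cons.mp this).1 hz'

private lemma prefixFind {V : Type*} {G : SimpleGraph V} {c d : V}
    (w : G.Walk c d) (S : Set V) (hd : d ∈ S) :
    ∃ (y : V) (r : G.Walk c y), y ∈ S ∧ (∀ z ∈ r.support, z ∈ S → z = y) ∧
      (∀ z ∈ r.support, z ∈ w.support) ∧ (w.IsPath → r.IsPath) := by
  induction w with
  | nil => exact ⟨_, Walk.nil, hd, by simp, by simp, fun _ => Walk.IsPath.nil⟩
  | @cons c b d' hadj w ih =>
    by_cases hc : c ∈ S
    · exact ⟨c, Walk.nil, hc, by simp, by simp, fun _ => Walk.IsPath.nil⟩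
    · obtain ⟨y, r, hy, h1, h2, h3⟩ := ih hd
      refine ⟨y, Walk.cons hadj r, hy, ?_, ?_, ?_⟩
      · intro z hz hzS
        rw [Walk.support_cons, List.mem_cons] at hz
        rcases hz with rfl | hz
        · exact absurd hzS hc
        · exact h1 z hz hzS
      · intro z hz
        rw [Walk.support_cons, List.mem_cons] at hz ⊢
        rcases hz with rfl | hz
        · exact Or.inl rfl
        · exact Or.inr (h2 z hz)
      · intro hP
        rw [Walk.cons_isPath_iff] at hP ⊢
        exact ⟨h3 hP.1, fun hc' => hP.2 (h2 c hc')⟩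

private def GClosed {W : Type*} (T : SimpleGraph W) (S : Set W) : Prop :=
  ∀ ⦃x y : W⦄, x ∈ S → y ∈ S → ∀ (p : T.Walk x y), p.IsPath → ∀ z ∈ p.support, z ∈ S

private lemma gcInter {W : Type*} {T : SimpleGraph W} {S₁ S₂ : Set W}
    (h₁ : GClosed T S₁) (h₂ : GClosed T S₂) : GClosed T (S₁ ∩ S₂) :=
  fun _ _ hx hy p hp z hz => ⟨h₁ hx.1 hy.1 p hp z hz, h₂ hx.2 hy.2 p hp z hz⟩

private lemma gcInduced {W : Type*} {T : SimpleGraph W} (hT : T.IsAcyclic) {S : Set W}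
    (hS : (T.induce S).Connected) : GClosed T S := by
  classical
  intro x y hx hy p hp z hz
  obtain ⟨w0⟩ := hS.preconnected ⟨x, hx⟩ ⟨y, hy⟩
  let w : T.Walk x y := w0.map (SimpleGraph.Embedding.induce S).toHom
  have huniq : p = (w.toPath : T.Walk x y) := by
    have := hT.path_unique ⟨p, hp⟩ w.toPath
    exact congrArg Subtype.val this
  have hz' : z ∈ (w.toPath : T.Walk x y).support := huniq ▸ hz
  have hz'' : z ∈ w.support := Walk.support_toPath_subset w hz'
  have hz3 : z ∈ (w0.map (SimpleGraph.Embedding.induce S).toHom).support := hz''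
  rw [Walk.support_map, List.mem_map] at hz3
  obtain ⟨⟨z', hz'S⟩, _, rfl⟩ := hz3
  exact hz'S

private lemma gcPathExists {W : Type*} {T : SimpleGraph W} (hT : T.IsTree) (x y : W) :
    ∃ p : T.Walk x y, p.IsPath := (hT.existsUnique_path x y).exists

private lemma gcUnion {W : Type*} {T : SimpleGraph W} (hT : T.IsTree) {S₁ S₂ : Set W}
    (h₁ : GClosed T S₁) (h₂ : GClosed T S₂) (hne : (S₁ ∩ S₂).Nonempty) :
    GClosed T (S₁ ∪ S₂) := by
  classical
  obtain ⟨m, hm₁, hm₂⟩ := hne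
  have key : ∀ {A B : Set W}, GClosed T A → GClosed T B → m ∈ A → m ∈ B →
      ∀ {x y : W}, x ∈ A → y ∈ B → ∀ (p : T.Walk x y), p.IsPath →
      ∀ z ∈ p.support, z ∈ A ∪ B := by
    intro A B hA hB hmA hmB x y hx hy p hp z hz
    obtain ⟨p₁, hp₁⟩ := gcPathExists hT x m
    obtain ⟨p₂, hp₂⟩ := gcPathExists hT m y
    have huniq : p = ((p₁.append p₂).toPath : T.Walk x y) := by
      have := hT.IsAcyclic.path_unique ⟨p, hp⟩ (p₁.append p₂).toPath
      exact congrArg Subtype.val this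
    have hz' : z ∈ (p₁.append p₂).support :=
      Walk.support_toPath_subset _ (huniq ▸ hz)
    rw [Walk.mem_support_append_iff] at hz'
    rcases hz' with hz' | hz'
    · exact Or.inl (hA hx hmA p₁ hp₁ z hz')
    · exact Or.inr (hB hmB hy p₂ hp₂ z hz')
  intro x y hx hy p hp z hz
  rcases hx with hx | hx <;> rcases hy with hy | hy
  · exact Or.inl (h₁ hx hy p hp z hz)
  · exact key h₁ h₂ hm₁ hm₂ hx hy p hp z hz
  · rcases key h₂ h₁ hm₂ hm₁ hx hy p hp z hz with h | h
    · exact Or.inr h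
    · exact Or.inl h
  · exact Or.inr (h₂ hx hy p hp z hz)

private lemma median {W : Type*} {T : SimpleGraph W} (hT : T.IsTree) (x y z : W) :
    ∃ m : W, (∃ p : T.Walk x y, p.IsPath ∧ m ∈ p.support) ∧
      (∃ p : T.Walk x z, p.IsPath ∧ m ∈ p.support) ∧
      (∃ p : T.Walk y z, p.IsPath ∧ m ∈ p.support) := by
  classical
  obtain ⟨qxz, hqxz⟩ := gcPathExists hT x z
  obtain ⟨qyz, hqyz⟩ := gcPathExists hT y z
  obtain ⟨m, r, hm, h1, h2, h3⟩ :=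
    prefixFind qxz {w | w ∈ qyz.support} (Walk.end_mem_support qyz)
  have hr : r.IsPath := h3 hqxz
  have hmyz : m ∈ qyz.support := hm
  let t := qyz.takeUntil m hmyz
  have ht : t.IsPath := hqyz.takeUntil hmyz
  have hw : (r.append t.reverse).IsPath := by
    refine myIsPath_append hr ht.reverse ?_
    intro z' hz' hz''
    rw [Walk.support_reverse, List.mem_reverse] at hz''
    exact h1 z' hz' (Walk.support_takeUntil_subset qyz hmyz hz'')
  refine ⟨m, ⟨r.append t.reverse, hw, ?_⟩, ⟨qxz, hqxz, h2 m r.end_mem_support⟩,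
    ⟨qyz, hqyz, hmyz⟩⟩
  rw [Walk.mem_support_append_iff]
  exact Or.inl r.end_mem_support

private lemma helly {W : Type*} [Nonempty W] {T : SimpleGraph W} (hT : T.IsTree)
    (n : ℕ) :
    ∀ 𝒮 : Finset (Set W), 𝒮.card ≤ n →
      (∀ S ∈ 𝒮, S.Nonempty) → (∀ S ∈ 𝒮, GClosed T S) →
      (∀ S ∈ 𝒮, ∀ S' ∈ 𝒮, (S ∩ S').Nonempty) → ∃ t : W, ∀ S ∈ 𝒮, t ∈ S := by
  classical
  induction n with
  | zero =>
    intro 𝒮 hcard _ _ _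
    have h0 : 𝒮 = ∅ := Finset.card_eq_zero.mp (Nat.le_zero.mp hcard)
    subst h0
    exact ⟨Classical.arbitrary W, fun S hS => absurd hS (Finset.notMem_empty S)⟩
  | succ n ih =>
    intro 𝒮 hcard hne hgc hpair
    by_cases hdist : ∃ S₁ ∈ 𝒮, ∃ S₂ ∈ 𝒮, S₁ ≠ S₂
    · obtain ⟨S₁, hS₁, S₂, hS₂, hne12⟩ := hdist
      set 𝒯 : Finset (Set W) := insert (S₁ ∩ S₂) ((𝒮.erase S₁).erase S₂) with h𝒯
      have hmem𝒯 : ∀ S ∈ 𝒯, S = S₁ ∩ S₂ ∨ S ∈ 𝒮 := by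
        intro S hS
        rcases Finset.mem_insert.mp hS with h | h
        · exact Or.inl h
        · exact Or.inr (Finset.mem_of_mem_erase (Finset.mem_of_mem_erase h))
      have hS₂e : S₂ ∈ 𝒮.erase S₁ := Finset.mem_erase.mpr ⟨Ne.symm hne12, hS₂⟩
      have hcard𝒯 : 𝒯.card ≤ n := by
        have h1 : ((𝒮.erase S₁).erase S₂).card = 𝒮.card - 2 := by
          rw [Finset.card_erase_of_mem hS₂e, Finset.card_erase_of_mem hS₁]
          omega
        have h2 : 1 < 𝒮.card := Finset.one_lt_card.mpr ⟨S₁, hS₁, S₂, hS₂, hne12⟩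
        have h3 := Finset.card_insert_le (S₁ ∩ S₂) ((𝒮.erase S₁).erase S₂)
        rw [h𝒯]
        omega
      have hkey : ∀ S₃ ∈ 𝒮, ((S₁ ∩ S₂) ∩ S₃).Nonempty := by
        intro S₃ hS₃
        obtain ⟨a, ha₁, ha₃⟩ := hpair S₁ hS₁ S₃ hS₃
        obtain ⟨b, hb₂, hb₃⟩ := hpair S₂ hS₂ S₃ hS₃
        obtain ⟨c, hc₁, hc₂⟩ := hpair S₁ hS₁ S₂ hS₂
        obtain ⟨m, ⟨pab, hpab, hm1⟩, ⟨pac, hpac, hm2⟩, ⟨pbc, hpbc, hm3⟩⟩ := median hT a b c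
        exact ⟨m, ⟨hgc S₁ hS₁ ha₁ hc₁ pac hpac m hm2, hgc S₂ hS₂ hb₂ hc₂ pbc hpbc m hm3⟩,
          hgc S₃ hS₃ ha₃ hb₃ pab hpab m hm1⟩
      have hyp1 : ∀ S ∈ 𝒯, S.Nonempty := by
        intro S hS
        rcases hmem𝒯 S hS with rfl | h
        · exact hpair S₁ hS₁ S₂ hS₂
        · exact hne S h
      have hyp2 : ∀ S ∈ 𝒯, GClosed T S := by
        intro S hS
        rcases hmem𝒯 S hS with rfl | h
        · exact gcInter (hgc S₁ hS₁) (hgc S₂ hS₂)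
        · exact hgc S h
      have hyp3 : ∀ S ∈ 𝒯, ∀ S' ∈ 𝒯, (S ∩ S').Nonempty := by
        intro S hS S' hS'
        rcases hmem𝒯 S hS with rfl | h
        · rcases hmem𝒯 S' hS' with rfl | h'
          · rw [Set.inter_self]; exact hpair S₁ hS₁ S₂ hS₂
          · exact hkey S' h'
        · rcases hmem𝒯 S' hS' with rfl | h'
          · rw [Set.inter_comm]; exact hkey S h
          · exact hpair S h S' h'
      obtain ⟨t, ht⟩ := ih 𝒯 hcard𝒯 hyp1 hyp2 hyp3
      refine ⟨t, fun S hS => ?_⟩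
      have h12 := ht _ (Finset.mem_insert_self (S₁ ∩ S₂) ((𝒮.erase S₁).erase S₂))
      rcases eq_or_ne S S₁ with rfl | h1
      · exact h12.1
      rcases eq_or_ne S S₂ with rfl | h2
      · exact h12.2
      exact ht S (Finset.mem_insert_of_mem
        (Finset.mem_erase.mpr ⟨h2, Finset.mem_erase.mpr ⟨h1, hS⟩⟩))
    · push_neg at hdist
      rcases Finset.eq_empty_or_nonempty 𝒮 with rfl | ⟨S, hS⟩
      · exact ⟨Classical.arbitrary W, fun S hS => absurd hS (Finset.notMem_empty S)⟩
      · obtain ⟨t, ht⟩ := hne S hS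
        exact ⟨t, fun S' hS' => (hdist S hS S' hS') ▸ ht⟩

private lemma halfPath {V : Type*} {G : SimpleGraph V} {u v x : V} {p : G.Walk u v}
    (hp : p.IsPath) (hx : x ∈ p.support) :
    ∃ (c : V) (P : G.Walk x c), P.IsPath ∧ (∀ z ∈ P.support, z ∈ p.support) ∧
      p.length ≤ 2 * P.length := by
  classical
  have hsplit := p.take_spec hx
  have hlen : (p.takeUntil x hx).length + (p.dropUntil x hx).length = p.length := by
    rw [← Walk.length_append, hsplit]
  by_cases hge : (p.dropUntil x hx).length ≤ (p.takeUntil x hx).length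
  · refine ⟨u, (p.takeUntil x hx).reverse, (hp.takeUntil hx).reverse, ?_, ?_⟩
    · intro z hz
      rw [Walk.support_reverse, List.mem_reverse] at hz
      exact Walk.support_takeUntil_subset p hx hz
    · rw [Walk.length_reverse]; omega
  · refine ⟨v, p.dropUntil x hx, hp.dropUntil hx, ?_, ?_⟩
    · exact fun z hz => Walk.support_dropUntil_subset p hx hz
    · omega

private lemma longest_meet {V : Type*} {G : SimpleGraph V} (hG : G.Connected)
    {u v a b : V} {p : G.Walk u v} {q : G.Walk a b}
    (hp : IsLongestPath G p) (hq : IsLongestPath G q) :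
    ∃ x, x ∈ p.support ∧ x ∈ q.support := by
  classical
  by_contra hdisj
  push_neg at hdisj
  obtain ⟨w0⟩ := hG.preconnected u b
  obtain ⟨y, r, hyq, hr1, _, _⟩ :=
    prefixFind w0 {z | z ∈ q.support} (Walk.end_mem_support q)
  obtain ⟨x, r2, hxp, hs1, hs2, _⟩ :=
    prefixFind r.reverse {z | z ∈ p.support}
      (by simpa using p.start_mem_support)
  -- r2 : Walk y x, meets p-support only at x; r2.support ⊆ r.support; r meets q-support only at y
  set R : G.Walk x y := (r2.reverse.toPath : G.Walk x y) with hR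
  have hRpath : R.IsPath := r2.reverse.toPath.2
  have hRsub : ∀ z ∈ R.support, z ∈ r2.support := by
    intro z hz
    have := Walk.support_toPath_subset r2.reverse hz
    rwa [Walk.support_reverse, List.mem_reverse] at this
  have hRp : ∀ z ∈ R.support, z ∈ p.support → z = x := fun z hz hzp =>
    hs1 z (hRsub z hz) hzp
  have hRq : ∀ z ∈ R.support, z ∈ q.support → z = y := by
    intro z hz hzq
    have h1 : z ∈ r.reverse.support := hs2 z (hRsub z hz)
    rw [Walk.support_reverse, List.mem_reverse] at h1
    exact hr1 z h1 hzq
  have hxy : x ≠ y := fun h => hdisj x hxp (h ▸ hyq)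
  have hRlen : 1 ≤ R.length := by
    rcases Nat.eq_zero_or_pos R.length with h0 | h1
    · exact absurd (Walk.eq_of_length_eq_zero h0) hxy
    · exact h1
  obtain ⟨c, P, hP, hPsub, hPlen⟩ := halfPath hp.1 hxp
  obtain ⟨d, Q, hQ, hQsub, hQlen⟩ := halfPath hq.1 hyq
  have hinner : (R.append Q).IsPath := by
    refine myIsPath_append hRpath hQ ?_
    exact fun z hz hz' => hRq z hz (hQsub z hz')
  have houter : (P.reverse.append (R.append Q)).IsPath := by
    refine myIsPath_append hP.reverse hinner ?_
    intro z hz hz'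
    rw [Walk.support_reverse, List.mem_reverse] at hz
    have hzp : z ∈ p.support := hPsub z hz
    rw [Walk.mem_support_append_iff] at hz'
    rcases hz' with hz' | hz'
    · exact hRp z hz' hzp
    · exact absurd (hQsub z hz') (hdisj z hzp)
  have hlen : (P.reverse.append (R.append Q)).length = P.length + (R.length + Q.length) := by
    rw [Walk.length_append, Walk.length_append, Walk.length_reverse]
  have hle := hp.2 _ houter
  rw [hlen] at hle
  have hqp : q.length ≤ p.length := hp.2 q hq.1
  have hpq : p.length ≤ q.length := hq.2 p hp.1
  omega


private lemma gcB {V W : Type*} {G : SimpleGraph V} {T : SimpleGraph W} (hT : T.IsTree)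
    (A : V → Set W) (hconn : ∀ v : V, (T.induce (A v)).Connected)
    (hadj : ∀ u v : V, G.Adj u v → (A u ∩ A v).Nonempty) :
    ∀ {u v : V} (p : G.Walk u v), GClosed T {w | ∃ x ∈ p.support, w ∈ A x} := by
  intro u v p
  induction p with
  | nil =>
    rename_i u0
    have h : {w | ∃ x ∈ (Walk.nil : G.Walk u0 u0).support, w ∈ A x} = A u0 := by
      ext w; simp
    rw [h]
    exact gcInduced hT.IsAcyclic (hconn u0)
  | @cons u u' v hadj' p ih =>
    have heq : {w | ∃ x ∈ (Walk.cons hadj' p).support, w ∈ A x}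
        = A u ∪ {w | ∃ x ∈ p.support, w ∈ A x} := by
      ext w
      simp only [Walk.support_cons, List.mem_cons, Set.mem_setOf_eq, Set.mem_union]
      constructor
      · rintro ⟨x, rfl | hx, hw⟩
        · exact Or.inl hw
        · exact Or.inr ⟨x, hx, hw⟩
      · rintro (hw | ⟨x, hx, hw⟩)
        · exact ⟨u, Or.inl rfl, hw⟩
        · exact ⟨x, Or.inr hx, hw⟩
    rw [heq]
    refine gcUnion hT (gcInduced hT.IsAcyclic (hconn u)) ih ?_
    obtain ⟨w, hw1, hw2⟩ := hadj u u' hadj'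
    exact ⟨w, hw1, ⟨u', p.start_mem_support, hw2⟩⟩

/-- If each vertex `v` of a connected graph `G` is assigned a (nonempty) subtree `A v`
of a tree `T` and adjacent vertices get intersecting subtrees, then some node `t` of
`T` is such that `{v | t ∈ A v}` meets every longest path of `G`. -/
theorem stmt_12 {V W : Type*} [Fintype V] [Fintype W] (G : SimpleGraph V)
    (hG : G.Connected) (T : SimpleGraph W) (hT : T.IsTree)
    (A : V → Set W)
    (hconn : ∀ v : V, (T.induce (A v)).Connected)
    (hadj : ∀ u v : V, G.Adj u v → (A u ∩ A v).Nonempty) :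
    ∃ t : W, IsLPTransversal G {v : V | t ∈ A v} := by
  classical
  have hNW : Nonempty W := hT.isConnected.nonempty
  have hAne : ∀ x : V, (A x).Nonempty := fun x =>
    Set.nonempty_coe_sort.mp (hconn x).nonempty
  have hFfin : {S : Set W | ∃ (u v : V) (p : G.Walk u v), IsLongestPath G p ∧
      S = {w | ∃ x ∈ p.support, w ∈ A x}}.Finite := Set.toFinite _
  set 𝒮 := hFfin.toFinset with h𝒮
  have hmem : ∀ S : Set W, S ∈ 𝒮 ↔ ∃ (u v : V) (p : G.Walk u v), IsLongestPath G p ∧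
      S = {w | ∃ x ∈ p.support, w ∈ A x} := fun S => hFfin.mem_toFinset
  have hyp1 : ∀ S ∈ 𝒮, S.Nonempty := by
    intro S hS
    obtain ⟨u, v, p, hp, rfl⟩ := (hmem S).mp hS
    obtain ⟨w, hw⟩ := hAne u
    exact ⟨w, ⟨u, p.start_mem_support, hw⟩⟩
  have hyp2 : ∀ S ∈ 𝒮, GClosed T S := by
    intro S hS
    obtain ⟨u, v, p, hp, rfl⟩ := (hmem S).mp hS
    exact gcB hT A hconn hadj p
  have hyp3 : ∀ S ∈ 𝒮, ∀ S' ∈ 𝒮, (S ∩ S').Nonempty := by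
    intro S hS S' hS'
    obtain ⟨u, v, p, hp, rfl⟩ := (hmem S).mp hS
    obtain ⟨a, b, q, hq, rfl⟩ := (hmem S').mp hS'
    obtain ⟨x, hxp, hxq⟩ := longest_meet hG hp hq
    obtain ⟨w, hw⟩ := hAne x
    exact ⟨w, ⟨x, hxp, hw⟩, ⟨x, hxq, hw⟩⟩
  obtain ⟨t, ht⟩ := helly hT 𝒮.card 𝒮 le_rfl hyp1 hyp2 hyp3
  refine ⟨t, fun u v p hp => ?_⟩
  have hBp : {w | ∃ x ∈ p.support, w ∈ A x} ∈ 𝒮 :=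
    (hmem _).mpr ⟨u, v, p, hp, rfl⟩
  obtain ⟨x, hx, htx⟩ := ht _ hBp
  exact ⟨x, htx, hx⟩
end

section
/- Every connected interval graph G satisfies lpt(G) ≤ 8, i.e., there is a set of at most 8 vertices intersecting every longest path of G. (This follows from the bound lpt(G) ≤ 4(tw(K₂)+1)|E(K₂)| = 8 for K₂-graphs.) -/
open SimpleGraph

set_option linter.unusedSectionVars false



section helpers

variable {V : Type*} [DecidableEq V] {G : SimpleGraph V}

/-- Gluing two paths whose supports meet only at the junction gives a path. -/
lemma lp13_append_isPath {u m w : V} {p : G.Walk u m} {q : G.Walk m w}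
    (hp : p.IsPath) (hq : q.IsPath)
    (h : ∀ z ∈ p.support, z ∈ q.support → z = m) : (p.append q).IsPath := by
  rw [Walk.isPath_def, Walk.support_append]
  have hq' := hq.support_nodup
  rw [q.support_eq_cons] at hq'
  have hm : m ∉ q.support.tail := (List.nodup_cons.mp hq').1
  refine List.Nodup.append hp.support_nodup (List.nodup_cons.mp hq').2 ?_
  intro x hxp hxq
  have hx2 : x ∈ q.support := by rw [q.support_eq_cons]; exact List.mem_cons_of_mem _ hxq
  have hxm := h x hxp hx2
  subst hxm
  exact hm hxq

/-- A vertex in both halves of a split path equals the split point. -/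
lemma lp13_split_eq {u v z x : V} {p : G.Walk u v} (hp : p.IsPath) (hz : z ∈ p.support)
    (hx1 : x ∈ (p.takeUntil z hz).support) (hx2 : x ∈ (p.dropUntil z hz).support) : x = z := by
  have hsp := hp
  rw [← p.take_spec hz, Walk.isPath_def, Walk.support_append] at hsp
  by_contra hne
  have hx2' : x ∈ (p.dropUntil z hz).support.tail := by
    have := (p.dropUntil z hz).support_eq_cons
    rw [this] at hx2
    rcases List.mem_cons.mp hx2 with h | h
    · exact absurd h hne
    · exact h
  exact (List.disjoint_of_nodup_append hsp) hx1 hx2'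

variable [Fintype V]


/-- There is a longest path. -/
lemma lp13_exists_longest (hne : Nonempty V) :
    ∃ (u v : V) (p : G.Walk u v), IsLongestPath G p := by
  classical
  obtain ⟨x⟩ := hne
  set P : ℕ → Prop := fun n => ∃ (u v : V) (p : G.Walk u v), p.IsPath ∧ p.length = n with hP
  have hP0 : P 0 := ⟨x, x, Walk.nil, Walk.IsPath.nil, rfl⟩
  have hspec : P (Nat.findGreatest P (Fintype.card V)) :=
    Nat.findGreatest_spec (Nat.zero_le _) hP0
  obtain ⟨u, v, p, hp, hlen⟩ := hspec
  refine ⟨u, v, p, hp, ?_⟩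
  intro a b q hq
  have : q.length ≤ Nat.findGreatest P (Fintype.card V) :=
    Nat.le_findGreatest (le_of_lt hq.length_lt) ⟨a, b, q, hq, rfl⟩
  omega

/-- Any two longest paths in a connected graph share a vertex. -/
lemma lp13_common (hG : G.Connected) {u v u' v' : V}
    {P : G.Walk u v} {Q : G.Walk u' v'}
    (hP : IsLongestPath G P) (hQ : IsLongestPath G Q) :
    ∃ w, w ∈ P.support ∧ w ∈ Q.support := by
  classical
  by_contra hdisj
  push_neg at hdisj
  -- lengths are equal
  have hlen : Q.length = P.length := le_antisymm (hP.2 Q hQ.1) (hQ.2 P hP.1)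
  -- minimal length of a connecting walk
  set Pr : ℕ → Prop := fun n =>
    ∃ (x y : V) (_ : x ∈ P.support) (_ : y ∈ Q.support) (R : G.Walk x y), R.length = n with hPr
  have hPrEx : ∃ n, Pr n := by
    obtain ⟨R⟩ := hG u u'
    exact ⟨R.length, u, u', P.start_mem_support, Q.start_mem_support, R, rfl⟩
  set n := Nat.find hPrEx with hn
  obtain ⟨x, y, hx, hy, R0, hR0⟩ := Nat.find_spec hPrEx
  set R := R0.bypass with hRdef
  have hRpath : R.IsPath := R0.bypass_isPath
  have hRlen : R.length = n := by
    have h1 : R.length ≤ n := by rw [hn, ← hR0]; exact R0.length_bypass_le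
    have h2 : n ≤ R.length := Nat.find_min' hPrEx ⟨x, y, hx, hy, R, rfl⟩
    omega
  -- any vertex of R in P's support is x
  have hRP : ∀ z ∈ R.support, z ∈ P.support → z = x := by
    intro z hzR hzP
    by_contra hne
    have hdrop : (R.dropUntil z hzR).length < n := by
      have hts := congrArg Walk.length (R.take_spec hzR)
      rw [Walk.length_append] at hts
      have htne : (R.takeUntil z hzR).length ≠ 0 := by
        intro h0
        exact hne ((Walk.eq_of_length_eq_zero h0).symm)
      omega
    exact absurd (Nat.find_min' hPrEx ⟨z, y, hzP, hy, R.dropUntil z hzR, rfl⟩)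
      (by omega)
  have hRQ : ∀ z ∈ R.support, z ∈ Q.support → z = y := by
    intro z hzR hzQ
    by_contra hne
    have hdrop : (R.takeUntil z hzR).length < n := by
      have hts := congrArg Walk.length (R.take_spec hzR)
      rw [Walk.length_append] at hts
      have htne : (R.dropUntil z hzR).length ≠ 0 := by
        intro h0
        exact hne (Walk.eq_of_length_eq_zero h0)
      omega
    exact absurd (Nat.find_min' hPrEx ⟨x, z, hx, hzQ, R.takeUntil z hzR, rfl⟩)
      (by omega)
  have hn1 : 1 ≤ n := by
    rcases Nat.eq_zero_or_pos n with h0 | h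
    · exfalso
      have hxy : x = y := Walk.eq_of_length_eq_zero (hRlen.trans h0)
      exact hdisj x hx (hxy ▸ hy)
    · exact h
  -- halves of P ending at x
  have hPlensplit : (P.takeUntil x hx).length + (P.dropUntil x hx).length = P.length := by
    have := congrArg Walk.length (P.take_spec hx)
    rw [Walk.length_append] at this
    omega
  obtain ⟨e, HP, hHPpath, hHPsup, hHPlen⟩ :
      ∃ (e : V) (HP : G.Walk e x), HP.IsPath ∧ (∀ z ∈ HP.support, z ∈ P.support) ∧
        P.length ≤ 2 * HP.length := by
    rcases le_or_gt P.length (2 * (P.takeUntil x hx).length) with hc | hc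
    · exact ⟨u, P.takeUntil x hx, hP.1.takeUntil hx,
        fun z hz => P.support_takeUntil_subset hx hz, hc⟩
    · refine ⟨v, (P.dropUntil x hx).reverse, (hP.1.dropUntil hx).reverse,
        fun z hz => ?_, ?_⟩
      · rw [Walk.support_reverse, List.mem_reverse] at hz
        exact P.support_dropUntil_subset hx hz
      · rw [Walk.length_reverse]
        omega
  -- halves of Q starting at y
  have hQlensplit : (Q.takeUntil y hy).length + (Q.dropUntil y hy).length = Q.length := by
    have := congrArg Walk.length (Q.take_spec hy)
    rw [Walk.length_append] at this
    omega
  obtain ⟨f, HQ, hHQpath, hHQsup, hHQlen⟩ :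
      ∃ (f : V) (HQ : G.Walk y f), HQ.IsPath ∧ (∀ z ∈ HQ.support, z ∈ Q.support) ∧
        Q.length ≤ 2 * HQ.length := by
    rcases le_or_gt Q.length (2 * (Q.dropUntil y hy).length) with hc | hc
    · exact ⟨v', Q.dropUntil y hy, hQ.1.dropUntil hy,
        fun z hz => Q.support_dropUntil_subset hy hz, hc⟩
    · refine ⟨u', (Q.takeUntil y hy).reverse, (hQ.1.takeUntil hy).reverse,
        fun z hz => ?_, ?_⟩
      · rw [Walk.support_reverse, List.mem_reverse] at hz
        exact Q.support_takeUntil_subset hy hz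
      · rw [Walk.length_reverse]
        omega
  -- glue
  have hRHQ : (R.append HQ).IsPath := by
    refine lp13_append_isPath hRpath hHQpath ?_
    intro z hz1 hz2
    exact hRQ z hz1 (hHQsup z hz2)
  have hW : (HP.append (R.append HQ)).IsPath := by
    refine lp13_append_isPath hHPpath hRHQ ?_
    intro z hz1 hz2
    rcases (Walk.mem_support_append_iff _ _).mp hz2 with h | h
    · exact hRP z h (hHPsup z hz1)
    · exact absurd (hdisj z (hHPsup z hz1)) (fun hnot => hnot (hHQsup z h))
  have hWlen : (HP.append (R.append HQ)).length = HP.length + n + HQ.length := by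
    rw [Walk.length_append, Walk.length_append, hRlen]
    omega
  have := hP.2 _ hW
  rw [hWlen] at this
  omega

end helpers





section intervals

variable {V : Type*} {G : SimpleGraph V} {a b : V → ℝ}
variable (hab : ∀ v, a v ≤ b v)
variable (hint : ∀ u v : V, u ≠ v →
  (G.Adj u v ↔ (Set.Icc (a u) (b u) ∩ Set.Icc (a v) (b v)).Nonempty))

include hab hint

/-- Two distinct vertices whose intervals share a point are adjacent. -/
lemma lp13_adj {u v : V} (hne : u ≠ v) {t : ℝ}
    (h1 : a u ≤ t) (h2 : t ≤ b u) (h3 : a v ≤ t) (h4 : t ≤ b v) : G.Adj u v :=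
  (hint u v hne).2 ⟨t, ⟨h1, h2⟩, ⟨h3, h4⟩⟩

/-- Adjacent vertices have intersecting intervals. -/
lemma lp13_meet {u v : V} (h : G.Adj u v) :
    ∃ s, a u ≤ s ∧ s ≤ b u ∧ a v ≤ s ∧ s ≤ b v := by
  obtain ⟨s, ⟨h1, h2⟩, h3, h4⟩ := (hint u v h.ne).1 h
  exact ⟨s, h1, h2, h3, h4⟩

/-- Along a walk, if some vertex has `a x ≤ t` and some has `t ≤ b y`, then
some vertex's interval contains `t`. -/
lemma lp13_cover {t : ℝ} :
    ∀ {u v : V} (w : G.Walk u v), (∃ x ∈ w.support, a x ≤ t) →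
      (∃ y ∈ w.support, t ≤ b y) → ∃ z ∈ w.support, a z ≤ t ∧ t ≤ b z := by
  intro u v w
  induction w with
  | @nil m =>
    rintro ⟨x, hx, hxa⟩ ⟨y, hy, hyb⟩
    have hx' : x = m := by simpa using hx
    have hy' : y = m := by simpa using hy
    exact ⟨m, by simp, hx' ▸ hxa, hy' ▸ hyb⟩
  | @cons m n v' h w2 ih =>
    rintro ⟨x, hx, hxa⟩ ⟨y, hy, hyb⟩
    by_cases hm : a m ≤ t ∧ t ≤ b m
    · exact ⟨m, Walk.start_mem_support _, hm⟩
    rw [not_and_or, not_le, not_le] at hm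
    obtain ⟨s, hs1, hs2, hs3, hs4⟩ := lp13_meet hab hint h
    rcases hm with hm | hm
    · -- t < a m
      have hxw : x ∈ w2.support := by
        rcases List.mem_cons.mp (by simpa using hx) with h' | h'
        · exact absurd hxa (by rw [h']; exact not_le.mpr hm)
        · exact h'
      have hyw : (∃ y ∈ w2.support, t ≤ b y) :=
        ⟨n, Walk.start_mem_support _, le_of_lt (lt_of_lt_of_le hm (hs1.trans hs4))⟩
      obtain ⟨z, hz, hza, hzb⟩ := ih ⟨x, hxw, hxa⟩ hyw
      exact ⟨z, by simp [hz], hza, hzb⟩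
    · -- b m < t
      have hxw : (∃ x ∈ w2.support, a x ≤ t) :=
        ⟨n, Walk.start_mem_support _, le_of_lt (lt_of_le_of_lt (hs3.trans hs2) hm)⟩
      have hyw : y ∈ w2.support := by
        rcases List.mem_cons.mp (by simpa using hy) with h' | h'
        · exact absurd hyb (by rw [h']; exact not_le.mpr hm)
        · exact h'
      obtain ⟨z, hz, hza, hzb⟩ := ih hxw ⟨y, hyw, hyb⟩
      exact ⟨z, by simp [hz], hza, hzb⟩

/-- Insertion lemma: a path starting at a vertex covering `c`, avoiding `v1, v2`
(the max-b and min-a vertices covering `c`), can be lengthened by one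
keeping the same start. -/
lemma lp13_insert {c : ℝ} {v1 v2 : V}
    (hv1 : a v1 ≤ c ∧ c ≤ b v1) (hv2 : a v2 ≤ c ∧ c ≤ b v2)
    (hv1max : ∀ v, a v ≤ c → c ≤ b v → b v ≤ b v1)
    (hv2min : ∀ v, a v ≤ c → c ≤ b v → a v2 ≤ a v) :
    ∀ {z v : V} (T : G.Walk z v), T.IsPath → a z ≤ c → c ≤ b z →
      v1 ∉ T.support → v2 ∉ T.support →
      ∃ (y : V) (T' : G.Walk z y), T'.IsPath ∧ T'.length = T.length + 1 ∧
        ∀ x ∈ T'.support, x = v1 ∨ x = v2 ∨ x ∈ T.support := by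
  intro z₀ v₀ T
  induction T with
  | @nil m =>
    intro _ hza hzb h1 h2
    have hne : m ≠ v1 := fun h => h1 (by simp [h])
    have hadj : G.Adj m v1 := lp13_adj hab hint hne hza hzb hv1.1 hv1.2
    refine ⟨v1, Walk.cons hadj Walk.nil, ?_, rfl, ?_⟩
    · simp [Walk.isPath_def, hne]
    · intro x hx
      simp only [Walk.support_cons, Walk.support_nil, List.mem_cons,
        List.mem_singleton] at hx
      rcases hx with h | h
      · right; right; simp [h]
      · rcases h with h | h
        · simp [h]
        · exact absurd h (by simp)
  | @cons m n v' h T₂ ih =>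
    intro hT hza hzb h1 h2
    have hT₂ : T₂.IsPath := hT.of_cons
    have hmT₂ : m ∉ T₂.support := ((Walk.cons_isPath_iff h T₂).mp hT).2
    have h1' : v1 ∉ T₂.support := fun hh => h1 (by simp [hh])
    have h2' : v2 ∉ T₂.support := fun hh => h2 (by simp [hh])
    by_cases hn : a n ≤ c ∧ c ≤ b n
    · -- recurse on the tail
      obtain ⟨y, T₂', hpath, hlen, hsub⟩ := ih hT₂ hn.1 hn.2 h1' h2'
      have hmT₂' : m ∉ T₂'.support := by
        intro hz
        rcases hsub m hz with h' | h' | h'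
        · exact h1 (by simp [h'])
        · exact h2 (by simp [h'])
        · exact hmT₂ h'
      refine ⟨y, Walk.cons h T₂', (Walk.cons_isPath_iff h T₂').mpr ⟨hpath, hmT₂'⟩, by
        simp [hlen], ?_⟩
      intro x hx
      simp only [Walk.support_cons, List.mem_cons] at hx ⊢
      rcases hx with h' | h'
      · right; right; left; exact h'
      · rcases hsub x h' with h'' | h'' | h''
        · exact Or.inl h''
        · exact Or.inr (Or.inl h'')
        · right; right; right; exact h''
    · -- insert v1 or v2 between m and n
      rw [not_and_or, not_le, not_le] at hn
      obtain ⟨s, hs1, hs2, hs3, hs4⟩ := lp13_meet hab hint h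
      have hnsup : n ∈ (Walk.cons h T₂).support := by simp
      have hmsup : m ∈ (Walk.cons h T₂).support := by simp
      obtain ⟨w, hwor, hwz, hwn⟩ :
          ∃ w, (w = v1 ∨ w = v2) ∧ G.Adj m w ∧ G.Adj w n := by
        rcases hn with hn | hn
        · -- c < a n : use v1
          have hne1 : m ≠ v1 := fun hh => h1 (hh ▸ hmsup)
          have hne2 : v1 ≠ n := fun hh => h1 (hh ▸ hnsup)
          refine ⟨v1, Or.inl rfl, lp13_adj hab hint hne1 hza hzb hv1.1 hv1.2, ?_⟩
          have hanb : a n ≤ b v1 := le_trans (hs3.trans hs2) (hv1max m hza hzb)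
          exact lp13_adj hab hint hne2 (le_trans hv1.1 (le_of_lt hn)) hanb le_rfl (hab n)
        · -- b n < c : use v2
          have hne1 : m ≠ v2 := fun hh => h2 (hh ▸ hmsup)
          have hne2 : v2 ≠ n := fun hh => h2 (hh ▸ hnsup)
          refine ⟨v2, Or.inr rfl, lp13_adj hab hint hne1 hza hzb hv2.1 hv2.2, ?_⟩
          have hv2a : a v2 ≤ b n := le_trans (hv2min m hza hzb) (hs1.trans hs4)
          exact lp13_adj hab hint hne2 hv2a (le_trans (le_of_lt hn) hv2.2) (hab n) le_rfl
      have hwsup : w ∉ (Walk.cons h T₂).support := by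
        rcases hwor with rfl | rfl
        · exact h1
        · exact h2
      have hwT₂ : w ∉ T₂.support := fun hh => hwsup (by simp [hh])
      have hmw : m ≠ w := fun hh => hwsup (hh ▸ hmsup)
      refine ⟨v', Walk.cons hwz (Walk.cons hwn T₂), ?_, by simp, ?_⟩
      · refine (Walk.cons_isPath_iff _ _).mpr ⟨(Walk.cons_isPath_iff _ _).mpr
          ⟨hT₂, hwT₂⟩, ?_⟩
        intro hh
        simp only [Walk.support_cons, List.mem_cons] at hh
        rcases hh with hh | hh
        · exact hmw hh
        · exact hmT₂ hh
      · intro x hx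
        simp only [Walk.support_cons, List.mem_cons] at hx ⊢
        rcases hx with h' | h' | h'
        · right; right; left; exact h'
        · rcases hwor with rfl | rfl
          · exact Or.inl h'
          · exact Or.inr (Or.inl h')
        · right; right; right; exact h'

end intervals

/-- Every connected interval graph has a longest path transversal of size at most 8. -/
theorem stmt_13 {V : Type*} [Fintype V] (G : SimpleGraph V) (hG : G.Connected)
    (a b : V → ℝ) (hab : ∀ v, a v ≤ b v)
    (hint : ∀ u v : V, u ≠ v →
      (G.Adj u v ↔ (Set.Icc (a u) (b u) ∩ Set.Icc (a v) (b v)).Nonempty)) :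
    ∃ S : Finset V, S.card ≤ 8 ∧ IsLPTransversal G ↑S := by
  classical
  have hne : Nonempty V := hG.nonempty
  obtain ⟨uP, vP, P, hP⟩ := lp13_exists_longest (G := G) hne
  -- the set of vertices minimizing `a` on some longest path
  set Smin : Finset V := Finset.univ.filter (fun v => ∃ (u w : V) (Q : G.Walk u w),
    IsLongestPath G Q ∧ v ∈ Q.support ∧ ∀ x ∈ Q.support, a v ≤ a x) with hSmin
  have hPsupne : P.support.toFinset.Nonempty := ⟨uP, by simp⟩
  obtain ⟨v₀', hv₀'mem, hv₀'min⟩ := Finset.exists_min_image P.support.toFinset a hPsupne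
  have hv₀'S : v₀' ∈ Smin := by
    rw [hSmin, Finset.mem_filter]
    exact ⟨Finset.mem_univ _, uP, vP, P, hP, List.mem_toFinset.mp hv₀'mem,
      fun x hx => hv₀'min x (List.mem_toFinset.mpr hx)⟩
  obtain ⟨v₀, hv₀S, hv₀max⟩ := Finset.exists_max_image Smin a ⟨v₀', hv₀'S⟩
  obtain ⟨uA, vA, A, hA, hv₀A, hv₀minA⟩ := (Finset.mem_filter.mp hv₀S).2
  set c := a v₀ with hc
  set K : Finset V := Finset.univ.filter (fun v => a v ≤ c ∧ c ≤ b v) with hK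
  have hv₀K : v₀ ∈ K := by
    rw [hK, Finset.mem_filter]
    exact ⟨Finset.mem_univ _, le_refl _, hab v₀⟩
  obtain ⟨v1, hv1K, hv1max'⟩ := Finset.exists_max_image K b ⟨v₀, hv₀K⟩
  obtain ⟨v2, hv2K, hv2min'⟩ := Finset.exists_min_image K a ⟨v₀, hv₀K⟩
  have hv1 : a v1 ≤ c ∧ c ≤ b v1 := (Finset.mem_filter.mp hv1K).2
  have hv2 : a v2 ≤ c ∧ c ≤ b v2 := (Finset.mem_filter.mp hv2K).2
  have hv1max : ∀ v, a v ≤ c → c ≤ b v → b v ≤ b v1 := fun v h1 h2 =>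
    hv1max' v (Finset.mem_filter.mpr ⟨Finset.mem_univ _, h1, h2⟩)
  have hv2min : ∀ v, a v ≤ c → c ≤ b v → a v2 ≤ a v := fun v h1 h2 =>
    hv2min' v (Finset.mem_filter.mpr ⟨Finset.mem_univ _, h1, h2⟩)
  refine ⟨{v1, v2}, ?_, ?_⟩
  · have h2 : ({v1, v2} : Finset V).card ≤ 2 :=
      (Finset.card_insert_le _ _).trans (by simp)
    omega
  · intro u v Q hQ
    by_contra hno
    push_neg at hno
    have hv1Q : v1 ∉ Q.support := hno v1 (by simp)
    have hv2Q : v2 ∉ Q.support := hno v2 (by simp)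
    -- a-side witness
    obtain ⟨mq, hmqmem, hmqmin⟩ := Finset.exists_min_image Q.support.toFinset a ⟨u, by simp⟩
    have hmqS : mq ∈ Smin := by
      rw [hSmin, Finset.mem_filter]
      exact ⟨Finset.mem_univ _, u, v, Q, hQ, List.mem_toFinset.mp hmqmem,
        fun x hx => hmqmin x (List.mem_toFinset.mpr hx)⟩
    have hax : ∃ x ∈ Q.support, a x ≤ c := ⟨mq, List.mem_toFinset.mp hmqmem, hv₀max mq hmqS⟩
    -- b-side witness: common vertex with A
    obtain ⟨w, hwA, hwQ⟩ := lp13_common hG hA hQ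
    have hby : ∃ y ∈ Q.support, c ≤ b y := ⟨w, hwQ, le_trans (hv₀minA w hwA) (hab w)⟩
    obtain ⟨z, hzQ, hza, hzb⟩ := lp13_cover hab hint Q hax hby
    -- split Q at z and lengthen the second half
    have hQ2path : (Q.dropUntil z hzQ).IsPath := hQ.1.dropUntil hzQ
    have hv1Q2 : v1 ∉ (Q.dropUntil z hzQ).support :=
      fun h => hv1Q (Q.support_dropUntil_subset hzQ h)
    have hv2Q2 : v2 ∉ (Q.dropUntil z hzQ).support :=
      fun h => hv2Q (Q.support_dropUntil_subset hzQ h)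
    obtain ⟨y, T', hT'path, hT'len, hT'sub⟩ :=
      lp13_insert hab hint hv1 hv2 hv1max hv2min (Q.dropUntil z hzQ)
        hQ2path hza hzb hv1Q2 hv2Q2
    have hW : ((Q.takeUntil z hzQ).append T').IsPath := by
      refine lp13_append_isPath (hQ.1.takeUntil hzQ) hT'path ?_
      intro x hx1 hx2
      rcases hT'sub x hx2 with rfl | rfl | hx3
      · exact absurd (Q.support_takeUntil_subset hzQ hx1) hv1Q
      · exact absurd (Q.support_takeUntil_subset hzQ hx1) hv2Q
      · exact lp13_split_eq hQ.1 hzQ hx1 hx3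
    have hWlen : ((Q.takeUntil z hzQ).append T').length = Q.length + 1 := by
      have hts := congrArg Walk.length (Q.take_spec hzQ)
      rw [Walk.length_append] at hts
      rw [Walk.length_append, hT'len]
      omega
    have hle := hQ.2 _ hW
    omega
end

section
/- Let G be a connected (bull, chair)-free graph in which every maximal induced path has exactly six vertices, let Q = q₁q₂q₃q₄q₅q₆ be a maximal induced path, and let w be a vertex adjacent to all vertices of some connected component C of G − N[Q] and having at least one neighbor in Q. Then w is adjacent to every vertex of Q. -/
open SimpleGraph

section Aux

/-- The abstract 8-vertex configuration: vertices `0..5` form a path, vertex `6` (playing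
the role of `w`) is adjacent to `i < 6` iff `s i`, and vertex `7` (playing the role of `c`)
is adjacent only to `6`. -/
def hadj (s : Fin 6 → Bool) (a b : Fin 8) : Bool :=
  (decide (a.val < 6) && decide (b.val < 6) &&
      (decide (a.val + 1 = b.val) || decide (b.val + 1 = a.val)))
  || (decide (a.val = 6) && decide (b.val < 6) && s ⟨b.val % 6, Nat.mod_lt _ (by norm_num)⟩)
  || (decide (b.val = 6) && decide (a.val < 6) && s ⟨a.val % 6, Nat.mod_lt _ (by norm_num)⟩)
  || (decide (a.val = 6) && decide (b.val = 7))
  || (decide (a.val = 7) && decide (b.val = 6))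

/-- Encode a subset of `Fin 6` as a natural number. -/
def enc (s : Fin 6 → Bool) : ℕ :=
  (cond (s 0) 1 0) + 2 * cond (s 1) 1 0 + 4 * cond (s 2) 1 0 + 8 * cond (s 3) 1 0 +
    16 * cond (s 4) 1 0 + 32 * cond (s 5) 1 0

/-- For each possible neighbourhood pattern, a witness: a flag (`true` = bull,
`false` = chair) and the five vertices of the induced copy inside the configuration. -/
def tbl : ℕ → Bool × (Fin 5 → Fin 8)
  | 2 => (false, ![1, 0, 2, 7, 6])
  | 3 => (true, ![2, 1, 6, 7, 0])
  | 4 => (false, ![2, 1, 3, 7, 6])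
  | 5 => (false, ![2, 1, 3, 7, 6])
  | 6 => (true, ![0, 1, 2, 3, 6])
  | 7 => (true, ![3, 2, 6, 7, 1])
  | 8 => (false, ![3, 2, 4, 7, 6])
  | 9 => (false, ![3, 2, 4, 0, 6])
  | 10 => (false, ![1, 0, 2, 7, 6])
  | 11 => (true, ![2, 1, 6, 7, 0])
  | 12 => (true, ![1, 2, 3, 4, 6])
  | 13 => (true, ![0, 6, 3, 4, 2])
  | 14 => (true, ![0, 1, 6, 7, 2])
  | 15 => (true, ![0, 6, 3, 4, 2])
  | 16 => (false, ![4, 3, 5, 7, 6])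
  | 17 => (false, ![4, 3, 5, 0, 6])
  | 18 => (false, ![1, 0, 2, 4, 6])
  | 19 => (true, ![2, 1, 6, 4, 0])
  | 20 => (false, ![2, 1, 3, 7, 6])
  | 21 => (false, ![2, 1, 3, 7, 6])
  | 22 => (true, ![0, 1, 2, 3, 6])
  | 23 => (true, ![3, 2, 6, 7, 1])
  | 24 => (true, ![2, 3, 4, 5, 6])
  | 25 => (true, ![0, 6, 3, 2, 4])
  | 26 => (true, ![1, 6, 4, 5, 3])
  | 27 => (true, ![0, 6, 3, 2, 4])
  | 28 => (true, ![1, 2, 6, 7, 3])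
  | 29 => (true, ![0, 6, 4, 5, 3])
  | 30 => (true, ![0, 1, 6, 4, 2])
  | 31 => (true, ![0, 6, 4, 5, 3])
  | 33 => (false, ![6, 0, 7, 4, 5])
  | 34 => (false, ![1, 0, 2, 5, 6])
  | 35 => (true, ![2, 1, 6, 5, 0])
  | 36 => (false, ![2, 1, 3, 5, 6])
  | 37 => (false, ![2, 1, 3, 5, 6])
  | 38 => (true, ![0, 1, 2, 3, 6])
  | 39 => (true, ![3, 2, 6, 5, 1])
  | 40 => (false, ![3, 2, 4, 7, 6])
  | 41 => (false, ![3, 2, 4, 0, 6])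
  | 42 => (false, ![1, 0, 2, 5, 6])
  | 43 => (true, ![2, 1, 6, 5, 0])
  | 44 => (true, ![1, 2, 3, 4, 6])
  | 45 => (true, ![0, 6, 3, 4, 2])
  | 46 => (true, ![0, 1, 6, 5, 2])
  | 47 => (true, ![0, 6, 3, 4, 2])
  | 48 => (true, ![3, 4, 6, 7, 5])
  | 49 => (true, ![0, 6, 4, 3, 5])
  | 50 => (true, ![1, 6, 4, 3, 5])
  | 51 => (true, ![0, 6, 4, 3, 5])
  | 52 => (true, ![3, 4, 6, 7, 5])
  | 53 => (true, ![0, 6, 4, 3, 5])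
  | 54 => (true, ![0, 1, 2, 3, 6])
  | 55 => (true, ![0, 6, 4, 3, 5])
  | 56 => (true, ![2, 3, 6, 7, 4])
  | 57 => (true, ![0, 6, 3, 2, 4])
  | 58 => (true, ![2, 3, 6, 7, 4])
  | 59 => (true, ![0, 6, 3, 2, 4])
  | 60 => (true, ![1, 2, 6, 5, 3])
  | 61 => (true, ![1, 2, 6, 5, 3])
  | 62 => (true, ![0, 1, 6, 4, 2])
  | _ => (true, ![0, 0, 0, 0, 0])

/-- The finite combinatorial core of the proof, checked by `decide`: for every nonempty,
non-full neighbourhood pattern `s` apart from the two singleton end patterns, the table entry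
gives an induced bull or chair inside the abstract configuration. -/
lemma key_check : ∀ s : Fin 6 → Bool, (∃ i, s i = true) → (∃ i, s i = false) →
    s ≠ (fun i => decide (i = 0)) → s ≠ (fun i => decide (i = 5)) →
    Function.Injective (tbl (enc s)).2 ∧
      ((tbl (enc s)).1 = true →
        ∀ i j, bull.Adj i j ↔ hadj s ((tbl (enc s)).2 i) ((tbl (enc s)).2 j) = true) ∧
      ((tbl (enc s)).1 = false →
        ∀ i j, chair.Adj i j ↔ hadj s ((tbl (enc s)).2 i) ((tbl (enc s)).2 j) = true) := by
  decide

end Aux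

set_option maxHeartbeats 1600000
/-- In a connected (bull, chair)-free graph all of whose maximal induced paths have
exactly six vertices, a vertex complete to a component of `G - N[Q]` (for `Q` a
maximal induced path) having a neighbor in `Q` is complete to `Q`. -/
theorem stmt_16 {V : Type*} [Fintype V] (G : SimpleGraph V) (hG : G.Connected)
    (hbull : IsEmpty (bull ↪g G)) (hchair : IsEmpty (chair ↪g G))
    (hmax6 : ∀ X : Set V, IsMaximalInducedPath G X → X.ncard = 6)
    (Q : Set V) (hQ : IsMaximalInducedPath G Q) (hQ6 : Q.ncard = 6)
    (C : Set V) (hC : IsComponentOf G (closedNbhd G Q) C)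
    (w : V) (hwC : ∀ c ∈ C, G.Adj w c) (hwQ : ∃ x ∈ Q, G.Adj w x) :
    ∀ x ∈ Q, G.Adj w x := by
  classical
  obtain ⟨⟨n, f, hf⟩, hQmax⟩ := hQ
  have hfi : Function.Injective f := f.injective
  have hn : n = 6 := by
    have h := hQ6
    rw [← hf, ← Set.image_univ, Set.ncard_image_of_injective _ hfi, Set.ncard_univ,
      Nat.card_eq_fintype_card, Fintype.card_fin] at h
    exact h
  subst hn
  obtain ⟨c, hcM, hCdef⟩ := hC
  have hc : c ∈ C := by
    rw [hCdef]
    refine ⟨Walk.nil, ?_⟩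
    intro x hx
    simp only [Walk.support_nil, List.mem_singleton] at hx
    subst hx; exact hcM
  have hwc : G.Adj w c := hwC c hc
  have hcw : G.Adj c w := hwc.symm
  have hcQ : ∀ x ∈ Q, ¬ G.Adj x c := fun x hx h => hcM (Or.inr ⟨x, hx, h⟩)
  have hwnQ : w ∉ Q := fun h => hcM (Or.inr ⟨w, h, hwc⟩)
  have hcnQ : c ∉ Q := fun h => hcM (Or.inl h)
  have hmemQ : ∀ i : Fin 6, f i ∈ Q := fun i => hf ▸ Set.mem_range_self i
  have hwf : ∀ i : Fin 6, w ≠ f i := fun i h => hwnQ (h ▸ hmemQ i)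
  have hcf : ∀ i : Fin 6, c ≠ f i := fun i h => hcnQ (h ▸ hmemQ i)
  have hwcne : w ≠ c := hwc.ne
  have hpadj : ∀ i j : Fin 6, G.Adj (f i) (f j) ↔ (i.val + 1 = j.val ∨ j.val + 1 = i.val) := by
    intro i j
    rw [f.map_adj_iff, pathGraph_adj]
  have hcfadj : ∀ i : Fin 6, ¬ G.Adj c (f i) := fun i h => hcQ _ (hmemQ i) h.symm
  have hfcadj : ∀ i : Fin 6, ¬ G.Adj (f i) c := fun i h => hcQ _ (hmemQ i) h
  by_contra hcon
  push_neg at hcon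
  obtain ⟨x0, hx0Q, hx0⟩ := hcon
  set s : Fin 6 → Bool := fun i => decide (G.Adj w (f i)) with hs
  have hsiff : ∀ i : Fin 6, s i = true ↔ G.Adj w (f i) := fun i => by simp [hs]
  have hwfadj : ∀ i : Fin 6, G.Adj (f i) w ↔ s i = true := fun i => by
    rw [G.adj_comm]; exact (hsiff i).symm
  have h1 : ∃ i, s i = true := by
    obtain ⟨x, hxQ, hadjwx⟩ := hwQ
    rw [← hf] at hxQ
    obtain ⟨i, rfl⟩ := hxQ
    exact ⟨i, (hsiff i).2 hadjwx⟩
  have h2 : ∃ i, s i = false := by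
    rw [← hf] at hx0Q
    obtain ⟨i, rfl⟩ := hx0Q
    refine ⟨i, ?_⟩
    simpa [hs] using hx0
  -- the two "pendant endpoint" patterns extend `Q` to a bigger induced path
  have extend : ∀ g : pathGraph 7 ↪g G, Set.range g = insert w Q → False := by
    intro g hr
    have h := hQmax (insert w Q) ⟨7, g, hr⟩ (Set.subset_insert _ _)
    exact hwnQ (h ▸ Set.mem_insert w Q)
  by_cases h3 : s = (fun i => decide (i = 0))
  · have hadj0 : ∀ i : Fin 6, G.Adj w (f i) ↔ i = 0 := fun i => by
      rw [← hsiff i, h3]; simp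
    have hadj0' : ∀ i : Fin 6, G.Adj (f i) w ↔ i = 0 := fun i =>
      (G.adj_comm _ _).trans (hadj0 i)
    have ev5 : ![w, f 0, f 1, f 2, f 3, f 4, f 5] (5 : Fin 7) = f 4 := rfl
    have ev6 : ![w, f 0, f 1, f 2, f 3, f 4, f 5] (6 : Fin 7) = f 5 := rfl
    have hinj7 : Function.Injective ![w, f 0, f 1, f 2, f 3, f 4, f 5] := by
      intro a b hab
      fin_cases a <;> fin_cases b <;>
        first
          | rfl
          | exact absurd (hfi hab) (by decide)
          | exact absurd hab (hwf _)
          | exact absurd hab.symm (hwf _)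
    refine extend ⟨⟨![w, f 0, f 1, f 2, f 3, f 4, f 5], ?_⟩, @fun a b => ?_⟩ ?_
    · exact hinj7
    · fin_cases a <;> fin_cases b <;>
        (try simp [ev5, ev6, pathGraph_adj, hpadj, hadj0, hadj0', G.irrefl]) <;> (try decide)
    · simp only [RelEmbedding.coe_mk, Function.Embedding.coeFn_mk]
      rw [Matrix.range_cons]
      have : Set.range ![f 0, f 1, f 2, f 3, f 4, f 5] = Set.range f := by
        ext x
        constructor
        · rintro ⟨i, rfl⟩
          fin_cases i <;> exact ⟨_, rfl⟩
        · rintro ⟨i, rfl⟩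
          fin_cases i
          exacts [⟨0, rfl⟩, ⟨1, rfl⟩, ⟨2, rfl⟩, ⟨3, rfl⟩, ⟨4, rfl⟩, ⟨5, rfl⟩]
      rw [this, hf, Set.singleton_union]
  by_cases h4 : s = (fun i => decide (i = 5))
  · have hadj5 : ∀ i : Fin 6, G.Adj w (f i) ↔ i = 5 := fun i => by
      rw [← hsiff i, h4]; simp
    have hadj5' : ∀ i : Fin 6, G.Adj (f i) w ↔ i = 5 := fun i =>
      (G.adj_comm _ _).trans (hadj5 i)
    have ev5 : ![w, f 5, f 4, f 3, f 2, f 1, f 0] (5 : Fin 7) = f 1 := rfl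
    have ev6 : ![w, f 5, f 4, f 3, f 2, f 1, f 0] (6 : Fin 7) = f 0 := rfl
    have hinj7 : Function.Injective ![w, f 5, f 4, f 3, f 2, f 1, f 0] := by
      intro a b hab
      fin_cases a <;> fin_cases b <;>
        first
          | rfl
          | exact absurd (hfi hab) (by decide)
          | exact absurd hab (hwf _)
          | exact absurd hab.symm (hwf _)
    refine extend ⟨⟨![w, f 5, f 4, f 3, f 2, f 1, f 0], ?_⟩, @fun a b => ?_⟩ ?_
    · exact hinj7
    · fin_cases a <;> fin_cases b <;>
        (try simp [ev5, ev6, pathGraph_adj, hpadj, hadj5, hadj5', G.irrefl]) <;> (try decide)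
    · simp only [RelEmbedding.coe_mk, Function.Embedding.coeFn_mk]
      rw [Matrix.range_cons]
      have : Set.range ![f 5, f 4, f 3, f 2, f 1, f 0] = Set.range f := by
        ext x
        constructor
        · rintro ⟨i, rfl⟩
          fin_cases i <;> exact ⟨_, rfl⟩
        · rintro ⟨i, rfl⟩
          fin_cases i
          exacts [⟨5, rfl⟩, ⟨4, rfl⟩, ⟨3, rfl⟩, ⟨2, rfl⟩, ⟨1, rfl⟩, ⟨0, rfl⟩]
      rw [this, hf, Set.singleton_union]
  -- main case: the table gives an induced bull or chair
  obtain ⟨hinj, hbul, hcha⟩ := key_check s h1 h2 h3 h4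
  set e : Fin 8 → V := ![f 0, f 1, f 2, f 3, f 4, f 5, w, c] with he
  have heinj : Function.Injective e := by
    intro a b hab
    rw [he] at hab
    fin_cases a <;> fin_cases b <;>
      first
        | rfl
        | exact absurd (hfi hab) (by decide)
        | exact absurd hab (hwf _)
        | exact absurd hab.symm (hwf _)
        | exact absurd hab (hcf _)
        | exact absurd hab.symm (hcf _)
        | exact absurd hab hwcne
        | exact absurd hab.symm hwcne
  have ee5 : ![f 0, f 1, f 2, f 3, f 4, f 5, w, c] (5 : Fin 8) = f 5 := rfl
  have ee6 : ![f 0, f 1, f 2, f 3, f 4, f 5, w, c] (6 : Fin 8) = w := rfl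
  have ee7 : ![f 0, f 1, f 2, f 3, f 4, f 5, w, c] (7 : Fin 8) = c := rfl
  have headj : ∀ a b : Fin 8, hadj s a b = true ↔ G.Adj (e a) (e b) := by
    intro a b
    fin_cases a <;> fin_cases b <;>
      (try simp [he, ee5, ee6, ee7, hadj, hpadj, hsiff, hwfadj, hwc, hcw, hcfadj, hfcadj,
        G.irrefl]) <;> (try decide)
  rcases hb : (tbl (enc s)).1 with _ | _
  · exact hchair.false
      ⟨⟨fun i => e ((tbl (enc s)).2 i), heinj.comp hinj⟩,
        @fun a b => (((hcha hb a b).trans (headj _ _)).symm)⟩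
  · exact hbull.false
      ⟨⟨fun i => e ((tbl (enc s)).2 i), heinj.comp hinj⟩,
        @fun a b => (((hbul hb a b).trans (headj _ _)).symm)⟩
end

section
/- Let G be a connected graph and suppose V(G) is partitioned into sets R, D, T such that D is complete to R and D separates R from T (no edges between R and T), and N[R] is a monitor in G. Then taking any vertex x ∈ R and any vertex w ∈ D that dominates a path-maximal component of G − N[R], the set {w, x} is a connected dominating set of G[N[R]]. Consequently lpt(G) ≤ 2. -/
open SimpleGraph

section helpers
variable {V : Type*} {G : SimpleGraph V}

private lemma split_first (M : Set V) :
    ∀ {u v : V} (p : G.Walk u v), u ∉ M → (∃ y ∈ p.support, y ∈ M) →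
      ∃ (z m : V) (q : G.Walk u z) (hzm : G.Adj z m) (r : G.Walk m v),
        p = q.append (Walk.cons hzm r) ∧ (∀ y ∈ q.support, y ∉ M) ∧ m ∈ M := by
  intro u v p
  induction p with
  | nil =>
    intro hu hex
    obtain ⟨y, hy, hyM⟩ := hex
    simp only [Walk.support_nil, List.mem_singleton] at hy
    subst hy; exact absurd hyM hu
  | @cons a b c h p ih =>
    intro hu hex
    by_cases hb : b ∈ M
    · refine ⟨a, b, Walk.nil, h, p, by simp, ?_, hb⟩
      intro y hy
      simp only [Walk.support_nil, List.mem_singleton] at hy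
      subst hy; exact hu
    · have hex' : ∃ y ∈ p.support, y ∈ M := by
        obtain ⟨y, hy, hyM⟩ := hex
        rw [Walk.support_cons, List.mem_cons] at hy
        rcases hy with rfl | hy
        · exact absurd hyM hu
        · exact ⟨y, hy, hyM⟩
      obtain ⟨z, m, q, hzm, r, hpeq, hq, hm⟩ := ih hb hex'
      refine ⟨z, m, Walk.cons h q, hzm, r, ?_, ?_, hm⟩
      · rw [Walk.cons_append, hpeq]
      · intro y hy
        rw [Walk.support_cons, List.mem_cons] at hy
        rcases hy with rfl | hy
        · exact hu
        · exact hq y hy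

end helpers

/-- Given a partition `(R, D, T)` of a connected graph with `D` complete to `R`,
`D` separating `R` from `T`, and `N[R] = R ∪ D` a monitor, any `x ∈ R` together with
a `w ∈ D` dominating a path-maximal component of `G - N[R]` forms a connected
dominating set of `G[N[R]]`; consequently `lpt(G) ≤ 2`. -/
theorem stmt_17 {V : Type*} [Fintype V] (G : SimpleGraph V) (hG : G.Connected)
    (R D T : Set V)
    (hcover : R ∪ D ∪ T = Set.univ)
    (hRD : Disjoint R D) (hRT : Disjoint R T) (hDT : Disjoint D T)
    (hRne : R.Nonempty) (hDne : D.Nonempty)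
    (hcomplete : ∀ r ∈ R, ∀ d ∈ D, G.Adj r d)
    (hsep : ∀ r ∈ R, ∀ t ∈ T, ¬ G.Adj r t)
    (hNR : closedNbhd G R = R ∪ D)
    (hmon : IsMonitor G (closedNbhd G R))
    (Cmax : Set V) (hCmax : IsComponentOf G (closedNbhd G R) Cmax)
    (hmax : ∀ C : Set V, IsComponentOf G (closedNbhd G R) C →
      ∀ ⦃u v : V⦄ (q : G.Walk u v), q.IsPath → (∀ x ∈ q.support, x ∈ C) →
        u ∈ bd G C (closedNbhd G R) →
        ∃ (u' v' : V) (p : G.Walk u' v'), p.IsPath ∧ (∀ x ∈ p.support, x ∈ Cmax) ∧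
          u' ∈ bd G Cmax (closedNbhd G R) ∧ q.length ≤ p.length)
    (x : V) (hx : x ∈ R) (w : V) (hw : w ∈ D)
    (hwdom : Dominates G {w} Cmax) :
    (({w, x} : Set V) ⊆ closedNbhd G R ∧
      (G.induce ({w, x} : Set V)).Connected ∧
      Dominates G {w, x} (closedNbhd G R)) ∧
    ∃ S : Finset V, S.card ≤ 2 ∧ IsLPTransversal G ↑S := by
  classical
  rw [hNR] at hmon hCmax hmax ⊢
  -- basic facts
  have hwx : w ≠ x := fun h => (Set.disjoint_left.1 hRD hx) (h ▸ hw)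
  have hadj_xw : G.Adj x w := hcomplete x hx w hw
  have hCmaxM : ∀ c ∈ Cmax, c ∉ R ∪ D := by
    obtain ⟨c₀, hc₀M, hCeq⟩ := hCmax
    intro c hc
    rw [hCeq] at hc
    obtain ⟨pc, hpc⟩ := hc
    exact hpc c pc.start_mem_support
  have hwC : ∀ c ∈ Cmax, G.Adj w c := by
    intro c hc
    rcases hwdom c hc with h | ⟨a, ha, hadj⟩
    · rw [Set.mem_singleton_iff] at h
      exact absurd (Or.inr hw) (h ▸ hCmaxM c hc)
    · rw [Set.mem_singleton_iff] at ha
      exact ha ▸ hadj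
  have hCmax_closed : ∀ c ∈ Cmax, ∀ n, G.Adj c n → n ∉ R ∪ D → n ∈ Cmax := by
    obtain ⟨c₀, hc₀M, hCeq⟩ := hCmax
    intro c hc n hcn hn
    rw [hCeq] at hc ⊢
    obtain ⟨pc, hpc⟩ := hc
    refine ⟨Walk.cons hcn.symm pc, ?_⟩
    intro y hy
    rw [Walk.support_cons, List.mem_cons] at hy
    rcases hy with rfl | hy
    · exact hn
    · exact hpc y hy
  have hTmem : ∀ y, y ∉ R ∪ D → y ∈ T := by
    intro y hy
    have h : y ∈ R ∪ D ∪ T := by rw [hcover]; exact Set.mem_univ y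
    rcases h with h | h
    · exact absurd h hy
    · exact h
  have hDadj : ∀ z, z ∉ R ∪ D → ∀ m ∈ R ∪ D, G.Adj z m → m ∈ D := by
    intro z hz m hm hzm
    rcases hm with h | h
    · exact absurd hzm.symm (hsep m h z (hTmem z hz))
    · exact h
  -- the key claim: every longest path contains w or x
  have key : ∀ ⦃a b : V⦄ (p : G.Walk a b), IsLongestPath G p →
      w ∈ p.support ∨ x ∈ p.support := by
    intro a b p hp
    by_contra hcon
    push_neg at hcon
    obtain ⟨hwp, hxp⟩ := hcon
    have hpath := hp.1
    have hlen := hp.2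
    -- no vertex adjacent to an endpoint can avoid the path
    have hnotend : ∀ (y : V), (G.Adj y a ∨ G.Adj b y) → y ∉ p.support → False := by
      intro y hy hyp
      rcases hy with h | h
      · have hW : (Walk.cons h p).IsPath := (Walk.cons_isPath_iff h p).2 ⟨hpath, hyp⟩
        have h2 := hlen _ hW
        rw [Walk.length_cons] at h2
        omega
      · have hW : (Walk.cons h.symm p.reverse).IsPath :=
          (Walk.cons_isPath_iff _ _).2 ⟨hpath.reverse,
            by rwa [Walk.support_reverse, List.mem_reverse]⟩
        have h2 := hlen _ hW
        rw [Walk.length_cons, Walk.length_reverse] at h2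
        omega
    -- endpoints avoid R ∪ D
    have haM : a ∉ R ∪ D := by
      rintro (h | h)
      · exact hnotend w (Or.inl (hcomplete a h w hw).symm) hwp
      · exact hnotend x (Or.inl (hcomplete x hx a h)) hxp
    have hbM : b ∉ R ∪ D := by
      rintro (h | h)
      · exact hnotend w (Or.inr (hcomplete b h w hw)) hwp
      · exact hnotend x (Or.inr (hcomplete x hx b h).symm) hxp
    -- endpoints avoid Cmax
    have haC : a ∉ Cmax := fun h => hnotend w (Or.inl (hwC a h)) hwp
    have hbC : b ∉ Cmax := fun h => hnotend w (Or.inr (hwC b h).symm) hwp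
    -- Claim A : the path avoids Cmax entirely
    have hAC : ∀ c ∈ p.support, c ∉ Cmax := by
      intro c hc hcC
      have hcb : c ≠ b := fun h => hbC (h ▸ hcC)
      obtain ⟨t1, t2, hspec⟩ : ∃ (t1 : G.Walk a c) (t2 : G.Walk c b), t1.append t2 = p :=
        ⟨_, _, p.take_spec hc⟩
      obtain ⟨n, hadj, q, rfl⟩ := Walk.exists_eq_cons_of_ne hcb t2
      have hsup : p.support = t1.support ++ q.support := by
        rw [← hspec, Walk.support_append, Walk.support_cons, List.tail_cons]
      have hlenp : p.length = t1.length + q.length + 1 := by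
        rw [← hspec, Walk.length_append, Walk.length_cons]; omega
      have hnodup : (t1.support ++ q.support).Nodup := by
        rw [← hsup]; exact hpath.support_nodup
      have hwq : w ∉ t1.support ++ q.support := by rw [← hsup]; exact hwp
      have hxq : x ∉ t1.support ++ q.support := by rw [← hsup]; exact hxp
      by_cases hnC : n ∈ Cmax
      · -- insert w between two consecutive Cmax vertices
        have hW : (t1.append (Walk.cons (hwC c hcC).symm (Walk.cons (hwC n hnC) q))).IsPath := by
          rw [Walk.isPath_def, Walk.support_append, Walk.support_cons, List.tail_cons,
            Walk.support_cons, List.nodup_middle]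
          exact List.nodup_cons.2 ⟨hwq, hnodup⟩
        have h2 := hlen _ hW
        rw [Walk.length_append, Walk.length_cons, Walk.length_cons] at h2
        omega
      · have hnM : n ∈ R ∪ D := by
          by_contra hnM
          exact hnC (hCmax_closed c hcC n hadj hnM)
        have hnD : n ∈ D := hDadj c (hCmaxM c hcC) n hnM hadj
        -- replace the edge c-n by c-w-x-n
        have hW : (t1.append (Walk.cons (hwC c hcC).symm (Walk.cons hadj_xw.symm
            (Walk.cons (hcomplete x hx n hnD) q)))).IsPath := by
          rw [Walk.isPath_def, Walk.support_append, Walk.support_cons, List.tail_cons,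
            Walk.support_cons, Walk.support_cons, List.nodup_middle, List.nodup_cons]
          constructor
          · intro hmem
            rw [List.mem_append, List.mem_cons] at hmem
            rw [List.mem_append] at hwq
            rcases hmem with h | h | h
            · exact hwq (Or.inl h)
            · exact hwx h
            · exact hwq (Or.inr h)
          · rw [List.nodup_middle]
            exact List.nodup_cons.2 ⟨hxq, hnodup⟩
        have h2 := hlen _ hW
        rw [Walk.length_append, Walk.length_cons, Walk.length_cons, Walk.length_cons] at h2
        omega
    -- Claim B : the path meets R ∪ D
    have hBM : ∃ y ∈ p.support, y ∈ R ∪ D := by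
      by_contra hno
      push_neg at hno
      obtain ⟨w', hw'M, hw'c⟩ := hmon _ ⟨a, haM, rfl⟩
      have hbc : b ∈ {v | ∃ q : G.Walk v a, ∀ y ∈ q.support, y ∉ R ∪ D} := by
        refine ⟨p.reverse, ?_⟩
        intro y hy
        rw [Walk.support_reverse, List.mem_reverse] at hy
        exact hno y hy
      exact hnotend w' (Or.inr (hw'c b hbc).symm) (fun h => hno w' h hw'M)
    -- split at the first vertex of R ∪ D
    obtain ⟨z, m, q, hzm, r, hpeq, hqM, hmM⟩ := split_first (R ∪ D) p haM hBM
    have hsup : p.support = q.support ++ r.support := by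
      rw [hpeq, Walk.support_append, Walk.support_cons, List.tail_cons]
    have hlenp : p.length = q.length + r.length + 1 := by
      rw [hpeq, Walk.length_append, Walk.length_cons]; omega
    have hnodupP : (q.support ++ r.support).Nodup := by
      rw [← hsup]; exact hpath.support_nodup
    have hzM : z ∉ R ∪ D := hqM z q.end_mem_support
    have hmD : m ∈ D := hDadj z hzM m hmM hzm
    have hqpath : q.IsPath := (Walk.isPath_def q).2 hnodupP.of_append_left
    -- the component of z
    have hzC : z ∈ {v | ∃ wk : G.Walk v z, ∀ y ∈ wk.support, y ∉ R ∪ D} := by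
      refine ⟨Walk.nil, ?_⟩
      intro y hy
      simp only [Walk.support_nil, List.mem_singleton] at hy
      subst hy; exact hzM
    have hqsub : ∀ y ∈ q.reverse.support,
        y ∈ {v | ∃ wk : G.Walk v z, ∀ s ∈ wk.support, s ∉ R ∪ D} := by
      intro y hy
      rw [Walk.support_reverse, List.mem_reverse] at hy
      exact ⟨q.dropUntil y hy, fun s hs => hqM s (q.support_dropUntil_subset hy hs)⟩
    obtain ⟨u', v', p', hp'path, hp'sub, hu'bd, hlen'⟩ :=
      hmax _ ⟨z, hzM, rfl⟩ q.reverse hqpath.reverse hqsub ⟨hzC, m, hmM, hzm⟩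
    have hlenq : q.length ≤ p'.length := by rwa [Walk.length_reverse] at hlen'
    have hu'C : u' ∈ Cmax := hu'bd.1
    -- final, longer walk
    have hwr : w ∉ r.support := fun h => hwp (by rw [hsup]; exact List.mem_append_right _ h)
    have hxr : x ∉ r.support := fun h => hxp (by rw [hsup]; exact List.mem_append_right _ h)
    have hW : (p'.reverse.append (Walk.cons (hwC u' hu'C).symm (Walk.cons hadj_xw.symm
        (Walk.cons (hcomplete x hx m hmD) r)))).IsPath := by
      rw [Walk.isPath_def, Walk.support_append, Walk.support_cons, List.tail_cons,
        Walk.support_cons, Walk.support_cons]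
      refine List.Nodup.append hp'path.reverse.support_nodup ?_ ?_
      · rw [List.nodup_cons, List.nodup_cons]
        refine ⟨?_, hxr, hnodupP.of_append_right⟩
        rw [List.mem_cons]
        rintro (h | h)
        · exact hwx h
        · exact hwr h
      · intro y hy1 hy2
        rw [Walk.support_reverse, List.mem_reverse] at hy1
        have hyC : y ∈ Cmax := hp'sub y hy1
        rw [List.mem_cons, List.mem_cons] at hy2
        rcases hy2 with rfl | rfl | h
        · exact hCmaxM y hyC (Or.inr hw)
        · exact hCmaxM y hyC (Or.inl hx)
        · exact hAC y (by rw [hsup]; exact List.mem_append_right _ h) hyC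
    have h2 := hlen _ hW
    rw [Walk.length_append, Walk.length_cons, Walk.length_cons, Walk.length_cons,
      Walk.length_reverse] at h2
    omega
  refine ⟨⟨?_, ?_, ?_⟩, ⟨{w, x}, ?_, ?_⟩⟩
  · intro y hy
    rcases hy with rfl | hy
    · exact Or.inr hw
    · rw [Set.mem_singleton_iff] at hy
      exact hy ▸ Or.inl hx
  · haveI : Nonempty ↥({w, x} : Set V) := ⟨⟨w, Or.inl rfl⟩⟩
    refine ⟨?_⟩
    rintro ⟨c, hc⟩ ⟨d, hd⟩
    have hadj' : ∀ (c' d' : V) (hc' : c' ∈ ({w, x} : Set V)) (hd' : d' ∈ ({w, x} : Set V)),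
        G.Adj c' d' → (G.induce ({w, x} : Set V)).Reachable ⟨c', hc'⟩ ⟨d', hd'⟩ := by
      intro c' d' hc' hd' h
      exact Adj.reachable (by simpa using h)
    rcases hc with rfl | hc
    · rcases hd with rfl | hd
      · rfl
      · rw [Set.mem_singleton_iff] at hd; subst hd
        exact hadj' _ _ _ _ hadj_xw.symm
    · rw [Set.mem_singleton_iff] at hc; subst hc
      rcases hd with rfl | hd
      · exact hadj' _ _ _ _ hadj_xw
      · rw [Set.mem_singleton_iff] at hd; subst hd
        rfl
  · intro b hb
    rcases hb with h | h
    · exact Or.inr ⟨w, Or.inl rfl, (hcomplete b h w hw).symm⟩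
    · exact Or.inr ⟨x, Or.inr rfl, hcomplete x hx b h⟩
  · exact (Finset.card_insert_le _ _).trans (by simp)
  · intro u v p hp
    rcases key p hp with h | h
    · exact ⟨w, by simp, h⟩
    · exact ⟨x, by simp, h⟩
end
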